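/- arXiv:2404.08604 — 4 statements merged into one kernel-verified Lean document; each statement's English description precedes it below -/
import Mathlib

section
/- Let 1 < p₁, p₂ < ∞ and 1 < q < ∞ with max(p₁,p₂) ≤ q. Then the weighted bilinear Hardy inequality on (0,∞) with weights Ũ, Ṽ₁, Ṽ₂ holds for some finite constant C > 0 (for all measurable F₁, F₂ ≥ 0) if and only if B₁ := sup_{0<t<∞} U₁(t)^{1/q} · V₁₁(t)^{1/p₁'} · V₁₂(t)^{1/p₂'} < ∞. -/
open MeasureTheory Set ENNReal

noncomputable section

/-- The conjugate exponent `p' = p/(p-1)`. -/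
def conjExp (p : ℝ) : ℝ := p / (p - 1)

/-- The weighted bilinear Hardy inequality on `(0,∞)` with weights `W, W₁, W₂`
and constant `C`:
`(∫₀^∞ H₂(F₁,F₂)(t)^q W(t) dt)^{1/q}`
  `≤ C (∫₀^∞ F₁^{p₁} W₁)^{1/p₁} (∫₀^∞ F₂^{p₂} W₂)^{1/p₂}`
for all measurable `F₁, F₂ ≥ 0`, where
`H₂(F₁,F₂)(t) = (∫₀ᵗ F₁)(∫₀ᵗ F₂)`. -/
def BilinearHardy (p₁ p₂ q : ℝ) (W W₁ W₂ : ℝ → ℝ) (C : ℝ≥0∞) : Prop :=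
  ∀ F₁ F₂ : ℝ → ℝ, Measurable F₁ → Measurable F₂ →
    (∀ t, 0 ≤ F₁ t) → (∀ t, 0 ≤ F₂ t) →
    (∫⁻ t in Ioi (0:ℝ),
        ((∫⁻ s in Ioo (0:ℝ) t, ENNReal.ofReal (F₁ s)) *
          (∫⁻ s in Ioo (0:ℝ) t, ENNReal.ofReal (F₂ s))) ^ q *
          ENNReal.ofReal (W t)) ^ (1 / q) ≤
      C * (∫⁻ t in Ioi (0:ℝ),
            ENNReal.ofReal (F₁ t) ^ p₁ * ENNReal.ofReal (W₁ t)) ^ (1 / p₁) *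
        (∫⁻ t in Ioi (0:ℝ),
            ENNReal.ofReal (F₂ t) ^ p₂ * ENNReal.ofReal (W₂ t)) ^ (1 / p₂)

/-- `U₁(t) = ∫ₜ^∞ W(s) ds`. -/
def U1 (W : ℝ → ℝ) (t : ℝ) : ℝ≥0∞ := ∫⁻ s in Ioi t, ENNReal.ofReal (W s)

/-- `V₁ᵢ(t) = ∫₀ᵗ Wᵢ(s)^{1-pᵢ'} ds`. -/
def V1 (p : ℝ) (W : ℝ → ℝ) (t : ℝ) : ℝ≥0∞ :=
  ∫⁻ s in Ioo (0:ℝ) t, ENNReal.ofReal (W s) ^ (1 - conjExp p)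

/-- `B₁ = sup_{t>0} U₁(t)^{1/q} V₁₁(t)^{1/p₁'} V₁₂(t)^{1/p₂'}`. -/
def B1 (p₁ p₂ q : ℝ) (W W₁ W₂ : ℝ → ℝ) : ℝ≥0∞ :=
  ⨆ t ∈ Ioi (0:ℝ),
    (U1 W t) ^ (1 / q) * (V1 p₁ W₁ t) ^ (1 / conjExp p₁) *
      (V1 p₂ W₂ t) ^ (1 / conjExp p₂)


section BHaux
open NNReal

namespace BH



lemma rpow_neg_mul_rpow_le_one (x : ℝ≥0∞) (c : ℝ) : x ^ (-c) * x ^ c ≤ 1 := by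
  rcases eq_or_ne x 0 with rfl | hx0
  · rcases lt_trichotomy c 0 with hc | rfl | hc
    · simp [ENNReal.zero_rpow_of_pos (by linarith : 0 < -c), ENNReal.zero_rpow_of_neg hc]
    · simp
    · simp [ENNReal.zero_rpow_of_pos hc, ENNReal.zero_rpow_of_neg (by linarith : -c < 0)]
  rcases eq_or_ne x ⊤ with rfl | hxt
  · rcases lt_trichotomy c 0 with hc | rfl | hc
    · simp [ENNReal.top_rpow_of_pos (by linarith : 0 < -c), ENNReal.top_rpow_of_neg hc]
    · simp
    · simp [ENNReal.top_rpow_of_pos hc, ENNReal.top_rpow_of_neg (by linarith : -c < 0)]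
  · rw [← ENNReal.rpow_add _ _ hx0 hxt]
    simp

lemma rpow_mul_rpow_eq (x : ℝ≥0∞) {a b : ℝ} (ha : 0 < a) (hb : 0 < b) (hab : a + b = 1) :
    x ^ a * x ^ b = x := by
  rcases eq_or_ne x 0 with rfl | hx0
  · simp [ENNReal.zero_rpow_of_pos ha, ENNReal.zero_rpow_of_pos hb]
  rcases eq_or_ne x ⊤ with rfl | hxt
  · simp [ENNReal.top_rpow_of_pos ha, ENNReal.top_rpow_of_pos hb]
  · rw [← ENNReal.rpow_add _ _ hx0 hxt, hab, ENNReal.rpow_one]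

lemma le_mul_inv_of_mul_le {x y B : ℝ≥0∞} (hy : y ≠ 0) (hB : B ≠ ⊤) (h : x * y ≤ B) :
    x ≤ B * y⁻¹ := by
  rcases eq_or_ne y ⊤ with rfl | hyt
  · have hx : x = 0 := by
      by_contra hx
      have : x * ⊤ = ⊤ := ENNReal.mul_top hx
      rw [this] at h
      exact hB (top_le_iff.mp h)
    simp [hx]
  · rw [← ENNReal.le_div_iff_mul_le (Or.inl hy) (Or.inl hyt)] at h
    rwa [div_eq_mul_inv] at h

lemma rpow_iSup (u : ℕ → ℝ≥0∞) (hu : Monotone u) {c : ℝ} (hc : 0 ≤ c) :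
    (⨆ n, u n) ^ c = ⨆ n, u n ^ c := by
  have h1 : Filter.Tendsto u Filter.atTop (nhds (⨆ n, u n)) := tendsto_atTop_iSup hu
  have h2 : Filter.Tendsto (fun n => u n ^ c) Filter.atTop (nhds ((⨆ n, u n) ^ c)) :=
    (ENNReal.continuous_rpow_const.tendsto _).comp h1
  have h3 : Filter.Tendsto (fun n => u n ^ c) Filter.atTop (nhds (⨆ n, u n ^ c)) :=
    tendsto_atTop_iSup (fun a b hab => ENNReal.rpow_le_rpow (hu hab) hc)
  exact tendsto_nhds_unique h2 h3

lemma tsum_rpow_le {f : ℤ → ℝ≥0∞} {r : ℝ} (hr : 1 ≤ r) :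
    ∑' k, f k ^ r ≤ (∑' k, f k) ^ r := by
  set S := ∑' k, f k with hS
  rcases eq_or_ne S ⊤ with hSt | hSt
  · rw [hSt, ENNReal.top_rpow_of_pos (by linarith)]; exact le_top
  rcases eq_or_ne S 0 with hS0 | hS0
  · have hf : ∀ k, f k = 0 := by
      intro k
      have := ENNReal.le_tsum (f := f) k
      rw [← hS, hS0] at this
      exact le_antisymm this (zero_le)
    simp [hf, ENNReal.zero_rpow_of_pos (by linarith : (0:ℝ) < r)]
  · have key : ∀ k, f k ^ r ≤ S ^ (r - 1) * f k := by
      intro k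
      rcases eq_or_ne (f k) 0 with h0 | h0
      · simp [h0, ENNReal.zero_rpow_of_pos (by linarith : (0:ℝ) < r)]
      · have hfk : f k ≠ ⊤ := fun h => hSt (top_le_iff.mp (h ▸ ENNReal.le_tsum k))
        have heq : f k ^ (r - 1) * f k = f k ^ r := by
          nth_rewrite 2 [← ENNReal.rpow_one (f k)]
          rw [← ENNReal.rpow_add _ _ h0 hfk]; norm_num
        rw [← heq]
        exact mul_le_mul_left (ENNReal.rpow_le_rpow (ENNReal.le_tsum k) (by linarith)) _
    calc ∑' k, f k ^ r ≤ ∑' k, S ^ (r - 1) * f k := ENNReal.tsum_le_tsum key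
      _ = S ^ (r - 1) * S := by rw [ENNReal.tsum_mul_left]
      _ = S ^ r := by
          nth_rewrite 2 [← ENNReal.rpow_one S]
          rw [← ENNReal.rpow_add _ _ hS0 hSt]; norm_num

lemma exists_dyadic {x : ℝ≥0∞} (h0 : x ≠ 0) (ht : x ≠ ⊤) :
    ∃ k : ℤ, (2:ℝ≥0∞) ^ ((k:ℝ) + 1) ≤ x ∧ x < 2 ^ ((k:ℝ) + 2) := by
  set y : ℝ≥0 := x.toNNReal with hy
  have hy0 : 0 < y := ENNReal.toNNReal_pos h0 ht
  have h1 : ((2:ℕ):ℝ≥0) ^ Int.log 2 y ≤ y := Int.zpow_log_le_self (by norm_num) hy0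
  have h2 : y < ((2:ℕ):ℝ≥0) ^ (Int.log 2 y + 1) := Int.lt_zpow_succ_log_self (by norm_num) y
  refine ⟨Int.log 2 y - 1, ?_, ?_⟩
  · have : ((Int.log 2 y - 1 : ℤ):ℝ) + 1 = ((Int.log 2 y : ℤ):ℝ) := by push_cast; ring
    rw [this, ENNReal.rpow_intCast]
    calc (2:ℝ≥0∞) ^ (Int.log 2 y) = ((2:ℝ≥0) ^ (Int.log 2 y) : ℝ≥0) := by
          rw [ENNReal.coe_zpow (by norm_num)]; norm_num
      _ ≤ (y : ℝ≥0∞) := by exact_mod_cast ENNReal.coe_le_coe.mpr (by exact_mod_cast h1)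
      _ = x := ENNReal.coe_toNNReal ht
  · have : ((Int.log 2 y - 1 : ℤ):ℝ) + 2 = ((Int.log 2 y + 1 : ℤ):ℝ) := by push_cast; ring
    rw [this, ENNReal.rpow_intCast]
    calc x = (y : ℝ≥0∞) := (ENNReal.coe_toNNReal ht).symm
      _ < ((2:ℝ≥0) ^ (Int.log 2 y + 1) : ℝ≥0) := by
          exact_mod_cast ENNReal.coe_lt_coe.mpr (by exact_mod_cast h2)
      _ = (2:ℝ≥0∞) ^ (Int.log 2 y + 1) := by rw [ENNReal.coe_zpow (by norm_num)]; norm_num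

lemma add_rpow_le (x y : ℝ≥0∞) {q : ℝ} (hq : 0 ≤ q) :
    (x + y) ^ q ≤ 2 ^ q * (x ^ q + y ^ q) := by
  have h1 : x + y ≤ 2 * (x ⊔ y) := by
    rw [two_mul]
    exact add_le_add le_sup_left le_sup_right
  calc (x + y) ^ q ≤ (2 * (x ⊔ y)) ^ q := ENNReal.rpow_le_rpow h1 hq
    _ = 2 ^ q * (x ⊔ y) ^ q := ENNReal.mul_rpow_of_nonneg _ _ hq
    _ ≤ 2 ^ q * (x ^ q + y ^ q) := by
        gcongr
        rcases le_total x y with h | h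
        · rw [sup_eq_right.2 h]; exact le_add_self
        · rw [sup_eq_left.2 h]; exact le_self_add






/-- Hölder inequality on a set for weighted integrals. -/
lemma holder_on_set {p : ℝ} (hp : 1 < p) (g σ : ℝ → ℝ≥0∞)
    (hg : Measurable g) (hσ : Measurable σ) (S : Set ℝ) :
    ∫⁻ x in S, g x * σ x ≤
      (∫⁻ x in S, g x ^ p * σ x) ^ (1/p) * (∫⁻ x in S, σ x) ^ (1 - 1/p) := by
  have hp0 : (0:ℝ) < p := by linarith
  have hpq : p.HolderConjugate (p / (p - 1)) := (Real.holderConjugate_iff_eq_conjExponent hp).mpr rfl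
  have key := ENNReal.lintegral_mul_le_Lp_mul_Lq (volume.restrict S) hpq
    (f := fun x => g x * σ x ^ (1/p)) (g := fun x => σ x ^ (1 - 1/p))
    ((hg.mul (hσ.pow_const _)).aemeasurable) ((hσ.pow_const _).aemeasurable)
  simp only [Pi.mul_apply] at key
  have e1 : ∀ x, (fun x => g x * σ x ^ (1/p)) x * (fun x => σ x ^ (1 - 1/p)) x
      = g x * σ x := by
    intro x
    simp only
    rw [mul_assoc]
    congr 1
    exact rpow_mul_rpow_eq (σ x) (by positivity) (by
      have : 1/p < 1 := by
        rw [div_lt_one hp0]; exact hp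
      linarith) (by ring)
  have e2 : ∀ x, ((fun x => g x * σ x ^ (1/p)) x) ^ p = g x ^ p * σ x := by
    intro x
    simp only
    rw [ENNReal.mul_rpow_of_nonneg _ _ (le_of_lt hp0), ← ENNReal.rpow_mul,
      one_div_mul_cancel (ne_of_gt hp0), ENNReal.rpow_one]
  have e3 : ∀ x, ((fun x => σ x ^ (1 - 1/p)) x) ^ (p/(p-1)) = σ x := by
    intro x
    simp only
    rw [← ENNReal.rpow_mul]
    have : (1 - 1/p) * (p/(p-1)) = 1 := by
      field_simp
      rw [div_self (by linarith : p - 1 ≠ 0)]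
    rw [this, ENNReal.rpow_one]
  have e4 : 1 / (p/(p-1)) = 1 - 1/p := by field_simp
  calc ∫⁻ x in S, g x * σ x = ∫⁻ x in S, (fun x => g x * σ x ^ (1/p)) x *
        (fun x => σ x ^ (1 - 1/p)) x := by
        apply lintegral_congr; intro x; rw [e1 x]
    _ ≤ (∫⁻ x in S, ((fun x => g x * σ x ^ (1/p)) x) ^ p) ^ (1/p) *
        (∫⁻ x in S, ((fun x => σ x ^ (1 - 1/p)) x) ^ (p/(p-1))) ^ (1/(p/(p-1))) := key
    _ = (∫⁻ x in S, g x ^ p * σ x) ^ (1/p) * (∫⁻ x in S, σ x) ^ (1 - 1/p) := by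
        rw [e4]
        congr 1
        · congr 1; apply lintegral_congr; intro x; rw [e2 x]
        · congr 1; apply lintegral_congr; intro x; rw [e3 x]



/-- measure (with density u) of an order-convex subset of `Ioi a` is at most the sup of
tail integrals `∫_{Ioi s} u` over points `s` of the set. -/
lemma setLIntegral_le_biSup_tail (u : ℝ → ℝ≥0∞) (a : ℝ) (T : Set ℝ)
    (hTa : T ⊆ Ioi a) (hT : T.OrdConnected) :
    ∫⁻ x in T, u x ≤ ⨆ s ∈ T, ∫⁻ x in Ioi s, u x := by
  rcases T.eq_empty_or_nonempty with rfl | ⟨t₀, ht₀⟩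
  · simp
  have hbdd : BddBelow T := ⟨a, fun x hx => le_of_lt (hTa hx)⟩
  set w := sInf T with hw
  by_cases hsing : T ⊆ {w}
  · have : volume T = 0 := by
      have : T ⊆ {w} := hsing
      exact measure_mono_null this (measure_singleton w)
    calc ∫⁻ x in T, u x = 0 := setLIntegral_measure_zero T u this
      _ ≤ _ := zero_le
  · rw [Set.not_subset] at hsing
    obtain ⟨t₁, ht₁, ht₁w⟩ := hsing
    rw [mem_singleton_iff] at ht₁w
    have hwt₁ : w < t₁ := lt_of_le_of_ne (csInf_le hbdd ht₁) (Ne.symm ht₁w)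
    have hsub : ∀ s, w < s → s ≤ t₁ → s ∈ T := by
      intro s hws hst
      obtain ⟨x, hxT, hxs⟩ := (csInf_lt_iff hbdd ⟨t₀, ht₀⟩).1 hws
      exact hT.out hxT ht₁ ⟨le_of_lt hxs, hst⟩
    have hTw : T ⊆ Ici w := fun x hx => csInf_le hbdd hx
    have step1 : ∫⁻ x in T, u x ≤ ∫⁻ x in Ioi w, u x := by
      calc ∫⁻ x in T, u x ≤ ∫⁻ x in Ici w, u x := lintegral_mono_set hTw
        _ = ∫⁻ x in Ioi w, u x := by
            rw [Measure.restrict_congr_set (Ioi_ae_eq_Ici (a := w)).symm]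
    -- increasing union
    set d : ℕ → ℝ := fun n => (t₁ - w) / (n + 1) with hd
    have hdpos : ∀ n, 0 < d n := by
      intro n
      apply div_pos (by linarith) (by positivity)
    have hdle : ∀ n, d n ≤ t₁ - w := by
      intro n
      apply div_le_self (by linarith) (by norm_num : (1:ℝ) ≤ (n:ℝ) + 1)
    have hunion : Ioi w = ⋃ n : ℕ, Ioi (w + d n) := by
      ext x
      simp only [mem_Ioi, mem_iUnion]
      constructor
      · intro hx
        obtain ⟨n, hn⟩ := exists_nat_gt ((t₁ - w) / (x - w))
        refine ⟨n, ?_⟩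
        have hxw0 : 0 < x - w := by linarith
        have hxw : (t₁ - w) / (x - w) < (n:ℝ) + 1 := by linarith
        rw [div_lt_iff₀ (by linarith : (0:ℝ) < x - w)] at hxw
        have hlt : d n < x - w := by
          rw [hd]
          simp only
          rw [div_lt_iff₀ (by positivity : (0:ℝ) < (n:ℝ) + 1)]
          nlinarith
        linarith
      · rintro ⟨n, hn⟩
        have := hdpos n
        linarith
    have hmono : Monotone (fun n : ℕ => Ioi (w + d n)) := by
      intro m n hmn
      apply Ioi_subset_Ioi
      have : d n ≤ d m := by
        apply div_le_div_of_nonneg_left (by linarith) (by positivity) (by exact_mod_cast by omega)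
      linarith
    have step2 : ∫⁻ x in Ioi w, u x = ⨆ n : ℕ, ∫⁻ x in Ioi (w + d n), u x := by
      have h1 : (volume.withDensity u) (Ioi w) = ⨆ n, (volume.withDensity u) (Ioi (w + d n)) := by
        rw [hunion]
        exact Directed.measure_iUnion (hmono.directed_le)
      rw [← withDensity_apply u measurableSet_Ioi, h1]
      congr 1
      ext n
      rw [withDensity_apply u measurableSet_Ioi]
    rw [step2] at step1
    refine le_trans step1 (iSup_le fun n => ?_)
    have hmem : w + d n ∈ T := hsub _ (by linarith [hdpos n]) (by linarith [hdle n])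
    exact le_iSup₂_of_le (w + d n) hmem le_rfl


lemma two_rpow_ne_top {y : ℝ} : (2:ℝ≥0∞) ^ y ≠ ⊤ := by
  simp [Ne, ENNReal.rpow_eq_top_iff]

lemma two_rpow_pos {y : ℝ} : (0:ℝ≥0∞) < 2 ^ y := by
  apply ENNReal.rpow_pos (by norm_num) (by norm_num)

lemma hardy_core {p q : ℝ} (hp : 1 < p) (hq : 1 < q) (hpq : p ≤ q) (a : ℝ)
    (u σ g : ℝ → ℝ≥0∞) (hu : Measurable u) (hσ : Measurable σ) (hg : Measurable g)
    {A : ℝ≥0∞} (hA : A ≠ ⊤)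
    (hyp : ∀ s, a < s →
      (∫⁻ x in Ioi s, u x) ^ (1/q) * (∫⁻ x in Ioo a s, σ x) ^ (1 - 1/p) ≤ A) :
    ∫⁻ t in Ioi a, (∫⁻ x in Ioo a t, g x * σ x) ^ q * u t ≤
      2 ^ (4*q) * A ^ q * (∫⁻ x in Ioi a, g x ^ p * σ x) ^ (q/p) := by
  have hp0 : (0:ℝ) < p := by linarith
  have hq0 : (0:ℝ) < q := by linarith
  have hp1 : (0:ℝ) < 1 - 1/p := by
    have : 1/p < 1 := by rw [div_lt_one hp0]; exact hp
    linarith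
  set G : ℝ → ℝ≥0∞ := fun t => ∫⁻ x in Ioo a t, g x * σ x with hG
  set U : ℝ → ℝ≥0∞ := fun s => ∫⁻ x in Ioi s, u x with hU
  set V : ℝ → ℝ≥0∞ := fun s => ∫⁻ x in Ioo a s, σ x with hV
  set D : ℝ≥0∞ := ∫⁻ x in Ioi a, g x ^ p * σ x with hD
  have hGmono : Monotone G := fun s t hst => lintegral_mono_set (Ioo_subset_Ioo_right hst)
  have hGmeas : Measurable G := hGmono.measurable
  set ν : Measure ℝ := volume.withDensity (fun x => g x * σ x) with hν
  have hνG : ∀ t, G t = ν (Ioo a t) := fun t =>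
    (withDensity_apply _ measurableSet_Ioo).symm
  have hνnull : ∀ c : ℝ, ν {c} = 0 := by
    intro c
    rw [withDensity_apply _ (measurableSet_singleton c)]
    exact setLIntegral_measure_zero _ _ (measure_singleton c)
  -- relate to holder
  have holderIoo : ∀ b s : ℝ, a ≤ b → ν (Ioo b s) ≤
      (∫⁻ x in Ioo b s, g x ^ p * σ x) ^ (1/p) * V s ^ (1 - 1/p) := by
    intro b s hab
    rw [withDensity_apply _ measurableSet_Ioo]
    refine le_trans (holder_on_set hp g σ hg hσ (Ioo b s)) ?_
    refine mul_le_mul_right (ENNReal.rpow_le_rpow ?_ (by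
      have : 1/p < 1 := by rw [div_lt_one hp0]; exact hp
      linarith)) _
    refine lintegral_mono_set fun x hx => ?_
    exact ⟨lt_of_le_of_lt hab hx.1, hx.2⟩
  -- the infinite part
  set Iinf : Set ℝ := Ioi a ∩ G ⁻¹' {⊤} with hIinf
  have hIinfMeas : MeasurableSet Iinf := measurableSet_Ioi.inter (hGmeas (measurableSet_singleton _))
  by_cases hIinfPos : ∫⁻ x in Iinf, u x = 0
  case neg =>
    -- RHS is infinite
    have hconv : Iinf.OrdConnected := by
      constructor
      intro x hx y hy z hz
      refine ⟨lt_of_lt_of_le hx.1 hz.1, ?_⟩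
      have hle : G x ≤ G z := hGmono hz.1
      have hxG : G x = ⊤ := hx.2
      simp only [mem_preimage, mem_singleton_iff]
      exact top_le_iff.mp (hxG ▸ hle)
    have hsup : 0 < ⨆ s ∈ Iinf, U s := by
      rcases eq_or_ne (⨆ s ∈ Iinf, U s) 0 with h0 | h0
      · exfalso
        apply hIinfPos
        have := setLIntegral_le_biSup_tail u a Iinf (fun x hx => hx.1) hconv
        rw [h0] at this
        exact le_antisymm this (zero_le)
      · exact pos_iff_ne_zero.mpr h0
    obtain ⟨s, hsI, hUs⟩ : ∃ s ∈ Iinf, 0 < U s := by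
      by_contra hcon
      push_neg at hcon
      have : (⨆ s ∈ Iinf, U s) ≤ 0 := iSup₂_le fun s hs => hcon s hs
      exact absurd (lt_of_lt_of_le hsup this) (lt_irrefl _)
    have hGs : G s = ⊤ := hsI.2
    have has : a < s := hsI.1
    have hVpos : V s ≠ 0 := by
      intro hV0
      have hσ0 : (fun x => σ x) =ᵐ[volume.restrict (Ioo a s)] 0 :=
        (lintegral_eq_zero_iff hσ).mp hV0
      have hgσ0 : (fun x => g x * σ x) =ᵐ[volume.restrict (Ioo a s)] 0 := by
        filter_upwards [hσ0] with x hx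
        simp only [Pi.zero_apply] at hx ⊢
        rw [hx, mul_zero]
      have : G s = 0 := by
        show (∫⁻ x in Ioo a s, g x * σ x) = 0
        rw [lintegral_congr_ae hgσ0]
        simp
      rw [this] at hGs
      exact absurd hGs (by simp)
    have hVtop : V s ≠ ⊤ := by
      intro hVt
      apply hA
      have h : U s ^ (1/q) * V s ^ (1 - 1/p) ≤ A := hyp s has
      rw [hVt, ENNReal.top_rpow_of_pos hp1] at h
      have hUs' : U s ^ (1/q) ≠ 0 := by
        rw [Ne, ENNReal.rpow_eq_zero_iff]
        push_neg
        constructor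
        · intro h'; exact absurd h' (ne_of_gt hUs)
        · intro _; positivity
      rw [ENNReal.mul_top hUs'] at h
      exact top_le_iff.mp h
    have hDtop : D = ⊤ := by
      have hold := holderIoo a s (le_refl a)
      rw [← hνG s, hGs] at hold
      rcases eq_or_ne (∫⁻ x in Ioo a s, g x ^ p * σ x) ⊤ with hX | hX
      · rw [hD]
        refine top_le_iff.mp ?_
        rw [← hX]
        refine lintegral_mono_set fun x hx => hx.1
      · exfalso
        have : (∫⁻ x in Ioo a s, g x ^ p * σ x) ^ (1/p) * V s ^ (1 - 1/p) ≠ ⊤ :=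
          ENNReal.mul_ne_top (ENNReal.rpow_ne_top_of_nonneg (by positivity) hX)
            (ENNReal.rpow_ne_top_of_nonneg (le_of_lt hp1) hVtop)
        exact this (top_le_iff.mp hold)
    have hApos : 0 < A := by
      have h : U s ^ (1/q) * V s ^ (1 - 1/p) ≤ A := hyp s has
      refine lt_of_lt_of_le ?_ h
      apply ENNReal.mul_pos
      · rw [Ne, ENNReal.rpow_eq_zero_iff]
        push_neg
        exact ⟨fun h' => absurd h' (ne_of_gt hUs), fun _ => by positivity⟩
      · rw [Ne, ENNReal.rpow_eq_zero_iff]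
        push_neg
        exact ⟨fun h' => absurd h' hVpos, fun _ => by linarith⟩
    have hRHS : 2 ^ (4*q) * A ^ q * D ^ (q/p) = ⊤ := by
      rw [hDtop, ENNReal.top_rpow_of_pos (by positivity)]
      rw [ENNReal.mul_top]
      apply mul_ne_zero
      · exact ne_of_gt two_rpow_pos
      · rw [Ne, ENNReal.rpow_eq_zero_iff]
        push_neg
        exact ⟨fun h' => absurd h' (ne_of_gt hApos), fun _ => by positivity⟩
    rw [hRHS]
    exact le_top
  case pos =>
    set Z : Set ℝ := Ioi a ∩ G ⁻¹' {0} with hZ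
    set Ω : Set ℝ := Ioi a ∩ G ⁻¹' (Ioo 0 ⊤) with hΩset
    have hZmeas : MeasurableSet Z := measurableSet_Ioi.inter (hGmeas (measurableSet_singleton _))
    have hΩmeas : MeasurableSet Ω := measurableSet_Ioi.inter (hGmeas measurableSet_Ioo)
    have hcover : Ioi a ⊆ (Z ∪ Ω) ∪ Iinf := by
      intro t ht
      rcases eq_or_ne (G t) 0 with h0 | h0
      · exact Or.inl (Or.inl ⟨ht, h0⟩)
      rcases eq_or_ne (G t) ⊤ with hT | hT
      · exact Or.inr ⟨ht, hT⟩
      · exact Or.inl (Or.inr ⟨ht, pos_iff_ne_zero.mpr h0, lt_top_iff_ne_top.mpr hT⟩)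
    have hZzero : ∫⁻ t in Z, G t ^ q * u t = 0 := by
      rw [setLIntegral_congr_fun_ae hZmeas (ae_of_all _ (fun t ht => by
        rw [show G t = 0 from ht.2, ENNReal.zero_rpow_of_pos hq0, zero_mul] : ∀ t ∈ Z,
          G t ^ q * u t = (fun _ => (0:ℝ≥0∞)) t))]
      simp
    have hIinfzero : ∫⁻ t in Iinf, G t ^ q * u t = 0 := by
      refine le_antisymm ?_ (zero_le)
      calc ∫⁻ t in Iinf, G t ^ q * u t ≤ ∫⁻ t in Iinf, ⊤ * u t :=
            lintegral_mono fun t => mul_le_mul_left le_top _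
        _ = ⊤ * ∫⁻ t in Iinf, u t := lintegral_const_mul ⊤ hu
        _ = 0 := by rw [hIinfPos, mul_zero]
    -- dyadic slabs
    set Sk : ℤ → Set ℝ := fun k =>
      Ioi a ∩ G ⁻¹' (Ico ((2:ℝ≥0∞) ^ ((k:ℝ)+1)) (2 ^ ((k:ℝ)+2))) with hSk
    set Ak : ℤ → Set ℝ := fun k =>
      Ioi a ∩ G ⁻¹' (Ioo ((2:ℝ≥0∞) ^ ((k:ℝ))) (2 ^ ((k:ℝ)+2))) with hAk
    set E : ℤ → ℝ≥0∞ := fun k => ∫⁻ x in Ak k, g x ^ p * σ x with hE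
    have hSkmeas : ∀ k : ℤ, MeasurableSet (Sk k) :=
      fun k => measurableSet_Ioi.inter (hGmeas measurableSet_Ico)
    have hAkmeas : ∀ k : ℤ, MeasurableSet (Ak k) :=
      fun k => measurableSet_Ioi.inter (hGmeas measurableSet_Ioo)
    have claim3 : ∀ k : ℤ, ((2:ℝ≥0∞)^((k:ℝ)))^q * ∫⁻ x in Sk k, u x ≤ A ^ q * E k ^ (q/p) := by
      intro k
      set T : Set ℝ :=
        {t | a < t ∧ (2:ℝ≥0∞)^((k:ℝ)+1) ≤ G t ∧ ∃ t', t ≤ t' ∧ G t' < 2^((k:ℝ)+2)} with hT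
      have hTa : T ⊆ Ioi a := fun t ht => ht.1
      have hTconv : T.OrdConnected := by
        constructor
        rintro x hx y hy z hz
        obtain ⟨t', ht'1, ht'2⟩ := hy.2.2
        exact ⟨lt_of_lt_of_le hx.1 hz.1, le_trans hx.2.1 (hGmono hz.1),
          ⟨t', le_trans hz.2 ht'1, ht'2⟩⟩
      have hST : Sk k ⊆ T := by
        rintro t ⟨ht1, ht2⟩
        exact ⟨ht1, ht2.1, ⟨t, le_rfl, ht2.2⟩⟩
      have key : ∀ s ∈ T, U s * ((2:ℝ≥0∞)^((k:ℝ)))^q ≤ A ^ q * E k ^ (q/p) := by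
        rintro s ⟨has, hGs, t', hst', hGt'⟩
        have hkey : (2:ℝ≥0∞)^((k:ℝ)) ≤ E k ^ (1/p) * V s ^ (1 - 1/p) := by
          set R : Set ℝ := {r | a < r ∧ G r ≤ 2^((k:ℝ))} with hR
          by_cases hRne : R.Nonempty
          · set w' := sSup R with hw'
            have hrles : ∀ r ∈ R, r ≤ s := by
              intro r hr
              by_contra hc
              push_neg at hc
              have h1 : G s ≤ G r := hGmono (le_of_lt hc)
              have h2 : (2:ℝ≥0∞)^((k:ℝ)) < 2^((k:ℝ)+1) :=
                ENNReal.rpow_lt_rpow_of_exponent_lt (by norm_num) (by norm_num) (by linarith)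
              exact lt_irrefl _ (lt_of_lt_of_le (lt_of_lt_of_le h2 hGs) (le_trans h1 hr.2))
            have hbddR : BddAbove R := ⟨s, hrles⟩
            obtain ⟨r₀, hr₀⟩ := id hRne
            have haw' : a < w' := lt_of_lt_of_le hr₀.1 (le_csSup hbddR hr₀)
            have hw's : w' ≤ s := csSup_le hRne hrles
            have hGw' : G w' ≤ (2:ℝ≥0∞)^((k:ℝ)) := by
              rw [hνG]
              set e : ℕ → ℝ := fun n => (w' - a) / (n + 1) with he
              have hepos : ∀ n, 0 < e n := fun n => div_pos (by linarith) (by positivity)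
              have hun : Ioo a w' = ⋃ n : ℕ, Ioo a (w' - e n) := by
                ext x
                simp only [mem_Ioo, mem_iUnion]
                constructor
                · rintro ⟨hax, hxw⟩
                  obtain ⟨n, hn⟩ := exists_nat_gt ((w' - a) / (w' - x))
                  have hwx : (0:ℝ) < w' - x := by linarith
                  have h3 : (w' - a) / (w' - x) < (n:ℝ) + 1 := by linarith
                  rw [div_lt_iff₀ hwx] at h3
                  refine ⟨n, hax, ?_⟩
                  have : e n < w' - x := by
                    rw [he]; simp only
                    rw [div_lt_iff₀ (by positivity : (0:ℝ) < (n:ℝ)+1)]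
                    nlinarith
                  linarith
                · rintro ⟨n, hax, hxw⟩
                  exact ⟨hax, by linarith [hepos n]⟩
              have hmono2 : Monotone (fun n : ℕ => Ioo a (w' - e n)) := by
                intro m n hmn
                apply Ioo_subset_Ioo_right
                have : e n ≤ e m := by
                  apply div_le_div_of_nonneg_left (by linarith) (by positivity)
                  exact_mod_cast by omega
                linarith
              rw [hun, Directed.measure_iUnion hmono2.directed_le]
              refine iSup_le fun n => ?_
              rw [← hνG]
              obtain ⟨r, hrR, hrlt⟩ := exists_lt_of_lt_csSup hRne
                (by linarith [hepos n] : w' - e n < w')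
              exact le_trans (hGmono (le_of_lt hrlt)) hrR.2
            have hwindow : Ioo w' s ⊆ Ak k := by
              rintro r ⟨hw'r, hrs⟩
              refine ⟨lt_trans haw' hw'r, ?_, ?_⟩
              · by_contra hc
                push_neg at hc
                have : r ∈ R := ⟨lt_trans haw' hw'r, hc⟩
                exact absurd (le_csSup hbddR this) (not_le.mpr hw'r)
              · exact lt_of_le_of_lt (hGmono (le_trans (le_of_lt hrs) hst')) hGt'
            have hsplit : G s ≤ G w' + ν (Ioo w' s) := by
              rw [hνG s, hνG w']
              calc ν (Ioo a s) ≤ ν (Ioo a w' ∪ Ico w' s) := by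
                    apply measure_mono
                    intro x hx
                    rcases lt_or_ge x w' with h | h
                    · exact Or.inl ⟨hx.1, h⟩
                    · exact Or.inr ⟨h, hx.2⟩
                _ ≤ ν (Ioo a w') + ν (Ico w' s) := measure_union_le _ _
                _ ≤ ν (Ioo a w') + ν (Ioo w' s) := by
                    refine add_le_add_right ?_ _
                    calc ν (Ico w' s) ≤ ν ({w'} ∪ Ioo w' s) := by
                          apply measure_mono
                          intro x hx
                          rcases eq_or_lt_of_le hx.1 with h | h
                          · exact Or.inl (by simp [← h])
                          · exact Or.inr ⟨h, hx.2⟩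
                      _ ≤ ν {w'} + ν (Ioo w' s) := measure_union_le _ _
                      _ = ν (Ioo w' s) := by rw [hνnull, zero_add]
            have hIoo : ν (Ioo w' s) ≤ E k ^ (1/p) * V s ^ (1 - 1/p) := by
              refine le_trans (holderIoo w' s (le_of_lt haw')) ?_
              exact mul_le_mul_left
                (ENNReal.rpow_le_rpow (lintegral_mono_set hwindow) (by positivity)) _
            have hchain : (2:ℝ≥0∞)^((k:ℝ)+1) ≤
                (2:ℝ≥0∞)^((k:ℝ)) + E k ^ (1/p) * V s ^ (1 - 1/p) :=
              le_trans hGs (le_trans hsplit (add_le_add hGw' hIoo))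
            have h2k : (2:ℝ≥0∞)^((k:ℝ)+1) = (2:ℝ≥0∞)^((k:ℝ)) + (2:ℝ≥0∞)^((k:ℝ)) := by
              rw [ENNReal.rpow_add _ _ (by norm_num) (by norm_num), ENNReal.rpow_one, mul_two]
            rw [h2k] at hchain
            exact (ENNReal.add_le_add_iff_left two_rpow_ne_top).mp hchain
          · have hRempty : ∀ r, a < r → (2:ℝ≥0∞)^((k:ℝ)) < G r := by
              intro r har
              by_contra hc
              push_neg at hc
              exact hRne ⟨r, har, hc⟩
            have hwindow : Ioo a s ⊆ Ak k := by
              rintro r ⟨har, hrs⟩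
              exact ⟨har, hRempty r har,
                lt_of_le_of_lt (hGmono (le_trans (le_of_lt hrs) hst')) hGt'⟩
            have hGsle : G s ≤ E k ^ (1/p) * V s ^ (1 - 1/p) := by
              rw [hνG s]
              refine le_trans (holderIoo a s le_rfl) ?_
              exact mul_le_mul_left
                (ENNReal.rpow_le_rpow (lintegral_mono_set hwindow) (by positivity)) _
            refine le_trans ?_ (le_trans hGs hGsle)
            exact le_of_lt (ENNReal.rpow_lt_rpow_of_exponent_lt (by norm_num) (by norm_num) (by linarith))
        have step : U s ^ (1/q) * (2:ℝ≥0∞)^((k:ℝ)) ≤ E k ^ (1/p) * A := by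
          calc U s ^ (1/q) * (2:ℝ≥0∞)^((k:ℝ))
              ≤ U s ^ (1/q) * (E k ^ (1/p) * V s ^ (1 - 1/p)) := mul_le_mul_right hkey _
            _ = E k ^ (1/p) * (U s ^ (1/q) * V s ^ (1 - 1/p)) := by ring
            _ ≤ E k ^ (1/p) * A := mul_le_mul_right (hyp s has) _
        have step2 := ENNReal.rpow_le_rpow step (le_of_lt hq0)
        rw [ENNReal.mul_rpow_of_nonneg _ _ (le_of_lt hq0),
          ENNReal.mul_rpow_of_nonneg _ _ (le_of_lt hq0),
          ← ENNReal.rpow_mul (U s), one_div_mul_cancel (ne_of_gt hq0), ENNReal.rpow_one,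
          ← ENNReal.rpow_mul (E k), show (1/p) * q = q/p by ring] at step2
        calc U s * ((2:ℝ≥0∞)^((k:ℝ)))^q ≤ E k ^ (q/p) * A ^ q := step2
          _ = A ^ q * E k ^ (q/p) := mul_comm _ _
      have hMl : ∫⁻ x in Sk k, u x ≤ ⨆ s ∈ T, U s :=
        le_trans (lintegral_mono_set hST) (setLIntegral_le_biSup_tail u a T hTa hTconv)
      calc ((2:ℝ≥0∞)^((k:ℝ)))^q * ∫⁻ x in Sk k, u x
          ≤ ((2:ℝ≥0∞)^((k:ℝ)))^q * ⨆ s ∈ T, U s := mul_le_mul_right hMl _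
        _ = ⨆ s ∈ T, ((2:ℝ≥0∞)^((k:ℝ)))^q * U s := by
            rw [ENNReal.mul_iSup]
            congr 1
            ext s
            rw [ENNReal.mul_iSup]
        _ ≤ A ^ q * E k ^ (q/p) := by
            refine iSup₂_le fun s hs => ?_
            rw [mul_comm]
            exact key s hs
    -- sum over slabs
    have hΩle : ∫⁻ t in Ω, G t ^ q * u t ≤
        ∑' k : ℤ, ((2:ℝ≥0∞)^((k:ℝ)+2))^q * ∫⁻ x in Sk k, u x := by
      have hpt : ∀ t ∈ Ω, G t ^ q * u t ≤
          ∑' k : ℤ, (Sk k).indicator (fun t => ((2:ℝ≥0∞)^((k:ℝ)+2))^q * u t) t := by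
        rintro t ⟨hta, htG⟩
        obtain ⟨k, hk1, hk2⟩ := exists_dyadic (ne_of_gt htG.1) (ne_of_lt htG.2)
        have hmem : t ∈ Sk k := ⟨hta, hk1, hk2⟩
        refine le_trans ?_ (ENNReal.le_tsum k)
        rw [indicator_of_mem hmem]
        exact mul_le_mul_left (ENNReal.rpow_le_rpow (le_of_lt hk2) (le_of_lt hq0)) _
      calc ∫⁻ t in Ω, G t ^ q * u t
          ≤ ∫⁻ t in Ω, ∑' k : ℤ,
              (Sk k).indicator (fun t => ((2:ℝ≥0∞)^((k:ℝ)+2))^q * u t) t := by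
            refine lintegral_mono_ae ?_
            rw [ae_restrict_iff' hΩmeas]
            exact ae_of_all _ hpt
        _ ≤ ∫⁻ t, ∑' k : ℤ,
              (Sk k).indicator (fun t => ((2:ℝ≥0∞)^((k:ℝ)+2))^q * u t) t :=
            setLIntegral_le_lintegral _ _
        _ = ∑' k : ℤ, ∫⁻ t, (Sk k).indicator (fun t => ((2:ℝ≥0∞)^((k:ℝ)+2))^q * u t) t :=
            lintegral_tsum fun k =>
              ((measurable_const.mul hu).indicator (hSkmeas k)).aemeasurable
        _ = ∑' k : ℤ, ((2:ℝ≥0∞)^((k:ℝ)+2))^q * ∫⁻ x in Sk k, u x := by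
            congr 1
            ext k
            rw [lintegral_indicator (hSkmeas k)]
            exact lintegral_const_mul _ hu
    -- overlap bound
    have hEsum : ∑' k : ℤ, E k ≤ 3 * D := by
      calc ∑' k : ℤ, E k
          = ∑' k : ℤ, ∫⁻ x, (Ak k).indicator (fun x => g x ^ p * σ x) x := by
            congr 1
            ext k
            rw [lintegral_indicator (hAkmeas k)]
        _ = ∫⁻ x, ∑' k : ℤ, (Ak k).indicator (fun x => g x ^ p * σ x) x :=
            (lintegral_tsum fun k =>
              (((hg.pow_const _).mul hσ).indicator (hAkmeas k)).aemeasurable).symm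
        _ ≤ ∫⁻ x, 3 * (Ioi a).indicator (fun x => g x ^ p * σ x) x := by
            refine lintegral_mono fun x => ?_
            by_cases hxa : x ∈ Ioi a
            · rw [indicator_of_mem hxa]
              by_cases hex : ∃ k₀ : ℤ, x ∈ Ak k₀
              · obtain ⟨k₀, hk₀⟩ := hex
                have hz : ∀ k : ℤ, k ∉ ({k₀ - 1, k₀, k₀ + 1} : Finset ℤ) →
                    (Ak k).indicator (fun x => g x ^ p * σ x) x = 0 := by
                  intro k hk
                  apply indicator_of_notMem
                  intro hc
                  apply hk
                  simp only [Finset.mem_insert, Finset.mem_singleton]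
                  have e1 : G x < 2 ^ ((k:ℝ)+2) := hc.2.2
                  have e2 : (2:ℝ≥0∞) ^ ((k:ℝ)) < G x := hc.2.1
                  have f1 : G x < 2 ^ ((k₀:ℝ)+2) := hk₀.2.2
                  have f2 : (2:ℝ≥0∞) ^ ((k₀:ℝ)) < G x := hk₀.2.1
                  have hklt : (k:ℝ) < (k₀:ℝ) + 2 := by
                    by_contra hcon
                    push_neg at hcon
                    have h5 : (2:ℝ≥0∞) ^ ((k₀:ℝ)+2) ≤ 2 ^ ((k:ℝ)) :=
                      ENNReal.rpow_le_rpow_of_exponent_le (by norm_num) hcon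
                    exact lt_irrefl _ (lt_trans (lt_of_lt_of_le f1 h5) e2)
                  have hk0lt : (k₀:ℝ) < (k:ℝ) + 2 := by
                    by_contra hcon
                    push_neg at hcon
                    have h5 : (2:ℝ≥0∞) ^ ((k:ℝ)+2) ≤ 2 ^ ((k₀:ℝ)) :=
                      ENNReal.rpow_le_rpow_of_exponent_le (by norm_num) hcon
                    exact lt_irrefl _ (lt_trans (lt_of_lt_of_le e1 h5) f2)
                  have hk1 : k < k₀ + 2 := by exact_mod_cast hklt
                  have hk2 : k₀ < k + 2 := by exact_mod_cast hk0lt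
                  omega
                rw [tsum_eq_sum hz]
                refine le_trans (Finset.sum_le_card_nsmul _ _ (g x ^ p * σ x)
                  (fun k _ => indicator_le_self _ _ x)) ?_
                rw [nsmul_eq_mul]
                refine mul_le_mul_left ?_ _
                have hcard : ({k₀ - 1, k₀, k₀ + 1} : Finset ℤ).card ≤ 3 := by
                  refine le_trans (Finset.card_insert_le _ _) ?_
                  have : ({k₀, k₀ + 1} : Finset ℤ).card ≤ 2 := by
                    refine le_trans (Finset.card_insert_le _ _) ?_
                    simp
                  omega
                exact_mod_cast Nat.cast_le.mpr hcard
              · have hallz : ∀ k : ℤ, (Ak k).indicator (fun x => g x ^ p * σ x) x = 0 :=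
                  fun k => indicator_of_notMem (fun hc => hex ⟨k, hc⟩) _
                simp [hallz]
            · have hallz : ∀ k : ℤ, (Ak k).indicator (fun x => g x ^ p * σ x) x = 0 :=
                fun k => indicator_of_notMem (fun hc => hxa hc.1) _
              simp [hallz]
        _ = 3 * D := by
            rw [lintegral_const_mul (f := (Ioi a).indicator (fun x => g x ^ p * σ x)) _ (((hg.pow_const _).mul hσ).indicator measurableSet_Ioi),
              lintegral_indicator measurableSet_Ioi]
    -- final summation
    have hqp1 : (1:ℝ) ≤ q / p := by
      rw [le_div_iff₀ hp0]
      linarith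
    have hfin : ∑' k : ℤ, ((2:ℝ≥0∞)^((k:ℝ)+2))^q * ∫⁻ x in Sk k, u x ≤
        2^(4*q) * A^q * D^(q/p) := by
      have hterm : ∀ k : ℤ, ((2:ℝ≥0∞)^((k:ℝ)+2))^q * ∫⁻ x in Sk k, u x ≤
          2^(2*q) * (A^q * E k ^ (q/p)) := by
        intro k
        have h22 : ((2:ℝ≥0∞)^((k:ℝ)+2))^q = 2^(2*q) * ((2:ℝ≥0∞)^((k:ℝ)))^q := by
          rw [ENNReal.rpow_add _ _ (by norm_num) (by norm_num),
            ENNReal.mul_rpow_of_nonneg _ _ (le_of_lt hq0),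
            ← ENNReal.rpow_mul (2:ℝ≥0∞) 2 q, mul_comm (((2:ℝ≥0∞)^((k:ℝ)))^q)]
        rw [h22, mul_assoc]
        exact mul_le_mul_right (claim3 k) _
      calc ∑' k : ℤ, ((2:ℝ≥0∞)^((k:ℝ)+2))^q * ∫⁻ x in Sk k, u x
          ≤ ∑' k : ℤ, 2^(2*q) * (A^q * E k ^ (q/p)) := ENNReal.tsum_le_tsum hterm
        _ = 2^(2*q) * (A^q * ∑' k : ℤ, E k ^ (q/p)) := by
            rw [ENNReal.tsum_mul_left, ENNReal.tsum_mul_left]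
        _ ≤ 2^(2*q) * (A^q * (∑' k : ℤ, E k) ^ (q/p)) :=
            mul_le_mul_right (mul_le_mul_right (tsum_rpow_le hqp1) _) _
        _ ≤ 2^(2*q) * (A^q * (3 * D) ^ (q/p)) :=
            mul_le_mul_right (mul_le_mul_right
              (ENNReal.rpow_le_rpow hEsum (by positivity)) _) _
        _ ≤ 2^(4*q) * A^q * D^(q/p) := by
            rw [ENNReal.mul_rpow_of_nonneg _ _ (by positivity : (0:ℝ) ≤ q/p)]
            have h3 : (3:ℝ≥0∞)^(q/p) ≤ 2^(2*q) := by
              calc (3:ℝ≥0∞)^(q/p) ≤ 3^q := ENNReal.rpow_le_rpow_of_exponent_le (by norm_num)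
                    (div_le_self (le_of_lt hq0) (le_of_lt hp))
                _ ≤ 4^q := ENNReal.rpow_le_rpow (by norm_num) (le_of_lt hq0)
                _ = 2^(2*q) := by
                    rw [show (4:ℝ≥0∞) = 2^(2:ℝ) by
                      rw [show (2:ℝ) = ((2:ℕ):ℝ) by norm_num, ENNReal.rpow_natCast]
                      norm_num, ← ENNReal.rpow_mul]
            calc 2^(2*q) * (A^q * (3^(q/p) * D^(q/p)))
                = (2^(2*q) * 3^(q/p)) * (A^q * D^(q/p)) := by ring
              _ ≤ (2^(2*q) * 2^(2*q)) * (A^q * D^(q/p)) :=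
                  mul_le_mul_left (mul_le_mul_right h3 _) _
              _ = 2^(4*q) * A^q * D^(q/p) := by
                  rw [← ENNReal.rpow_add _ _ (by norm_num) (by norm_num),
                    show (2*q + 2*q) = 4*q by ring, mul_assoc]
    calc ∫⁻ t in Ioi a, (∫⁻ x in Ioo a t, g x * σ x) ^ q * u t
        = ∫⁻ t in Ioi a, G t ^ q * u t := rfl
      _ ≤ ∫⁻ t in (Z ∪ Ω) ∪ Iinf, G t ^ q * u t := lintegral_mono_set hcover
      _ ≤ (∫⁻ t in Z ∪ Ω, G t ^ q * u t) + ∫⁻ t in Iinf, G t ^ q * u t :=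
          lintegral_union_le _ _ _
      _ ≤ ((∫⁻ t in Z, G t ^ q * u t) + ∫⁻ t in Ω, G t ^ q * u t) +
            ∫⁻ t in Iinf, G t ^ q * u t := add_le_add_left (lintegral_union_le _ _ _) _
      _ = ∫⁻ t in Ω, G t ^ q * u t := by rw [hZzero, hIinfzero, zero_add, add_zero]
      _ ≤ _ := le_trans hΩle hfin



lemma rpow_ne_top' {x : ℝ≥0∞} (hx0 : x ≠ 0) (hxt : x ≠ ⊤) (c : ℝ) : x ^ c ≠ ⊤ := by
  simp [ENNReal.rpow_eq_top_iff, hx0, hxt]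

lemma rpow_ne_zero' {x : ℝ≥0∞} (hx0 : x ≠ 0) (hxt : x ≠ ⊤) (c : ℝ) : x ^ c ≠ 0 := by
  simp [ENNReal.rpow_eq_zero_iff, hx0, hxt]

lemma rpow_sub_one_mul {x : ℝ≥0∞} (hx0 : x ≠ 0) (hxt : x ≠ ⊤) (c : ℝ) :
    x ^ (c - 1) * x = x ^ c := by
  nth_rewrite 2 [← ENNReal.rpow_one x]
  rw [← ENNReal.rpow_add _ _ hx0 hxt]
  norm_num

lemma cancel_rpow {a : ℝ≥0∞} (ha0 : a ≠ 0) (hat : a ≠ ⊤) (c : ℝ) : a ^ c * a ^ (-c) = 1 := by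
  rw [← ENNReal.rpow_add _ _ ha0 hat]
  simp

lemma mul_rpow_neg {a : ℝ≥0∞} (ha0 : a ≠ 0) (hat : a ≠ ⊤) (c : ℝ) :
    a * a ^ (-c) = a ^ (1 - c) := by
  nth_rewrite 1 [← ENNReal.rpow_one a]
  rw [← ENNReal.rpow_add _ _ ha0 hat]
  ring_nf


lemma setLIntegral_Ioo_pos {f : ℝ → ℝ≥0∞} (hf : Measurable f) {t : ℝ} (ht : 0 < t)
    (hpos : ∀ s ∈ Ioo (0:ℝ) t, 0 < f s) : 0 < ∫⁻ s in Ioo (0:ℝ) t, f s := by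
  rw [lintegral_pos_iff_support hf, Measure.restrict_apply' measurableSet_Ioo]
  refine lt_of_lt_of_le ?_ (measure_mono (fun s hs => ⟨(hpos s hs).ne', hs⟩))
  rw [Real.volume_Ioo]
  exact ENNReal.ofReal_pos.mpr (by linarith)

lemma necessity {p₁ p₂ q : ℝ} (hp₁ : 1 < p₁) (hp₂ : 1 < p₂) (hq : 1 < q)
    {W W₁ W₂ : ℝ → ℝ} (hW : Measurable W) (hW₁ : Measurable W₁) (hW₂ : Measurable W₂)
    (hW₁pos : ∀ t ∈ Ioi (0:ℝ), 0 < W₁ t) (hW₂pos : ∀ t ∈ Ioi (0:ℝ), 0 < W₂ t)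
    {C : ℝ≥0∞} (hBH : BilinearHardy p₁ p₂ q W W₁ W₂ C) :
    B1 p₁ p₂ q W W₁ W₂ ≤ C := by
  have hq0 : (0:ℝ) < q := by linarith
  have hp₁0 : (0:ℝ) < p₁ := by linarith
  have hp₂0 : (0:ℝ) < p₂ := by linarith
  have hp₁1 : (0:ℝ) < 1 - 1/p₁ := by
    have : 1/p₁ < 1 := by rw [div_lt_one hp₁0]; exact hp₁
    linarith
  have hp₂1 : (0:ℝ) < 1 - 1/p₂ := by
    have : 1/p₂ < 1 := by rw [div_lt_one hp₂0]; exact hp₂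
    linarith
  rw [B1]
  refine iSup₂_le fun t ht => ?_
  rw [mem_Ioi] at ht
  set σ₁ : ℝ → ℝ≥0∞ := fun s => (ENNReal.ofReal (W₁ s)) ^ (1 - conjExp p₁) with hσ₁
  set σ₂ : ℝ → ℝ≥0∞ := fun s => (ENNReal.ofReal (W₂ s)) ^ (1 - conjExp p₂) with hσ₂
  have hσ₁m : Measurable σ₁ := (hW₁.ennreal_ofReal).pow_const _
  have hσ₂m : Measurable σ₂ := (hW₂.ennreal_ofReal).pow_const _
  set Vn₁ : ℕ → ℝ≥0∞ := fun n => ∫⁻ s in Ioo (0:ℝ) t, min (σ₁ s) ((n:ℝ≥0∞)+1) with hVn₁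
  set Vn₂ : ℕ → ℝ≥0∞ := fun n => ∫⁻ s in Ioo (0:ℝ) t, min (σ₂ s) ((n:ℝ≥0∞)+1) with hVn₂
  have hWpos₁ : ∀ s ∈ Ioo (0:ℝ) t, 0 < W₁ s := fun s hs => hW₁pos s hs.1
  have hWpos₂ : ∀ s ∈ Ioo (0:ℝ) t, 0 < W₂ s := fun s hs => hW₂pos s hs.1
  have hσ₁pos : ∀ s ∈ Ioo (0:ℝ) t, 0 < σ₁ s ∧ σ₁ s ≠ ⊤ := by
    intro s hs
    have h0 : ENNReal.ofReal (W₁ s) ≠ 0 := (ENNReal.ofReal_pos.mpr (hWpos₁ s hs)).ne'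
    exact ⟨pos_iff_ne_zero.mpr (rpow_ne_zero' h0 ENNReal.ofReal_ne_top _),
      rpow_ne_top' h0 ENNReal.ofReal_ne_top _⟩
  have hσ₂pos : ∀ s ∈ Ioo (0:ℝ) t, 0 < σ₂ s ∧ σ₂ s ≠ ⊤ := by
    intro s hs
    have h0 : ENNReal.ofReal (W₂ s) ≠ 0 := (ENNReal.ofReal_pos.mpr (hWpos₂ s hs)).ne'
    exact ⟨pos_iff_ne_zero.mpr (rpow_ne_zero' h0 ENNReal.ofReal_ne_top _),
      rpow_ne_top' h0 ENNReal.ofReal_ne_top _⟩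
  -- the per-n bound
  have main : ∀ n : ℕ,
      (U1 W t)^(1/q) * (Vn₁ n)^(1 - 1/p₁) * (Vn₂ n)^(1 - 1/p₂) ≤ C := by
    intro n
    set F₁ : ℝ → ℝ := fun s =>
      if s ∈ Ioo (0:ℝ) t then min ((W₁ s) ^ (1 - conjExp p₁)) ((n:ℝ)+1) else 0 with hF₁
    set F₂ : ℝ → ℝ := fun s =>
      if s ∈ Ioo (0:ℝ) t then min ((W₂ s) ^ (1 - conjExp p₂)) ((n:ℝ)+1) else 0 with hF₂
    have hF₁m : Measurable F₁ :=
      Measurable.ite measurableSet_Ioo ((hW₁.pow_const _).min measurable_const) measurable_const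
    have hF₂m : Measurable F₂ :=
      Measurable.ite measurableSet_Ioo ((hW₂.pow_const _).min measurable_const) measurable_const
    have hF₁nn : ∀ s, 0 ≤ F₁ s := by
      intro s
      rw [hF₁]
      simp only
      split_ifs with hs
      · exact le_min (le_of_lt (Real.rpow_pos_of_pos (hWpos₁ s hs) _)) (by positivity)
      · exact le_rfl
    have hF₂nn : ∀ s, 0 ≤ F₂ s := by
      intro s
      rw [hF₂]
      simp only
      split_ifs with hs
      · exact le_min (le_of_lt (Real.rpow_pos_of_pos (hWpos₂ s hs) _)) (by positivity)
      · exact le_rfl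
    have hmonoOfReal : Monotone ENNReal.ofReal := fun _ _ h => ENNReal.ofReal_le_ofReal h
    have hofReal₁ : ∀ s ∈ Ioo (0:ℝ) t,
        ENNReal.ofReal (F₁ s) = min (σ₁ s) ((n:ℝ≥0∞)+1) := by
      intro s hs
      rw [hF₁]
      simp only [if_pos hs]
      rw [hmonoOfReal.map_min]
      congr 1
      · exact (ENNReal.ofReal_rpow_of_pos (hWpos₁ s hs)).symm
      · rw [show ((n:ℝ)+1) = ((n+1 : ℕ):ℝ) by push_cast; ring, ENNReal.ofReal_natCast]
        push_cast
        ring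
    have hofReal₂ : ∀ s ∈ Ioo (0:ℝ) t,
        ENNReal.ofReal (F₂ s) = min (σ₂ s) ((n:ℝ≥0∞)+1) := by
      intro s hs
      rw [hF₂]
      simp only [if_pos hs]
      rw [hmonoOfReal.map_min]
      congr 1
      · exact (ENNReal.ofReal_rpow_of_pos (hWpos₂ s hs)).symm
      · rw [show ((n:ℝ)+1) = ((n+1 : ℕ):ℝ) by push_cast; ring, ENNReal.ofReal_natCast]
        push_cast
        ring
    -- RHS bounds
    have hRHS : ∀ (σ : ℝ → ℝ≥0∞) (Wf : ℝ → ℝ) (F : ℝ → ℝ) (pp : ℝ), 1 < pp →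
        (∀ s ∈ Ioo (0:ℝ) t, 0 < Wf s) →
        (σ = fun s => (ENNReal.ofReal (Wf s)) ^ (1 - conjExp pp)) →
        (∀ s ∈ Ioo (0:ℝ) t, ENNReal.ofReal (F s) = min (σ s) ((n:ℝ≥0∞)+1)) →
        (∀ s, s ∉ Ioo (0:ℝ) t → F s = 0) →
        (∫⁻ s in Ioi (0:ℝ), ENNReal.ofReal (F s) ^ pp * ENNReal.ofReal (Wf s)) ≤
          ∫⁻ s in Ioo (0:ℝ) t, min (σ s) ((n:ℝ≥0∞)+1) := by
      intro σ Wf F pp hpp hWfpos hσdef hofr hFz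
      have hpp0 : (0:ℝ) < pp := by linarith
      have hpt : ∀ s ∈ Ioo (0:ℝ) t,
          ENNReal.ofReal (F s) ^ pp * ENNReal.ofReal (Wf s) ≤ min (σ s) ((n:ℝ≥0∞)+1) := by
        intro s hs
        have hWs := hWfpos s hs
        set v := ENNReal.ofReal (Wf s) with hv
        have hv0 : v ≠ 0 := (ENNReal.ofReal_pos.mpr hWs).ne'
        have hvt : v ≠ ⊤ := ENNReal.ofReal_ne_top
        have hσ0 : σ s ≠ 0 := by rw [hσdef]; exact rpow_ne_zero' hv0 hvt _
        have hσt : σ s ≠ ⊤ := by rw [hσdef]; exact rpow_ne_top' hv0 hvt _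
        set m := min (σ s) ((n:ℝ≥0∞)+1) with hm
        have hm0 : m ≠ 0 := by
          have h1 : (0:ℝ≥0∞) < (n:ℝ≥0∞)+1 := lt_of_lt_of_le zero_lt_one le_add_self
          have : 0 < m := lt_min (pos_iff_ne_zero.mpr hσ0) h1
          exact this.ne'
        have hmt : m ≠ ⊤ := by
          refine ne_top_of_le_ne_top ?_ (min_le_right _ _)
          exact ENNReal.add_ne_top.mpr ⟨ENNReal.natCast_ne_top n, one_ne_top⟩
        have hexp : (1 - conjExp pp) * (pp - 1) = -1 := by
          have hne : pp - 1 ≠ 0 := by linarith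
          rw [conjExp, sub_mul, one_mul, div_mul_cancel₀ _ hne]
          ring
        rw [hofr s hs, ← hm]
        calc m ^ pp * v = m ^ (pp - 1) * m * v := by rw [rpow_sub_one_mul hm0 hmt]
          _ ≤ (σ s) ^ (pp - 1) * m * v :=
              mul_le_mul_left (mul_le_mul_left
                (ENNReal.rpow_le_rpow (min_le_left _ _) (by linarith)) _) _
          _ = v ^ (-1:ℝ) * m * v := by rw [hσdef, ← ENNReal.rpow_mul, hexp]
          _ = m * (v ^ (-1:ℝ) * v) := by ring
          _ = m := by rw [ENNReal.rpow_neg_one, ENNReal.inv_mul_cancel hv0 hvt, mul_one]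
      calc ∫⁻ s in Ioi (0:ℝ), ENNReal.ofReal (F s) ^ pp * ENNReal.ofReal (Wf s)
          ≤ (∫⁻ s in Ioo (0:ℝ) t, ENNReal.ofReal (F s) ^ pp * ENNReal.ofReal (Wf s)) +
            ∫⁻ s in Ioi (0:ℝ) \ Ioo (0:ℝ) t,
              ENNReal.ofReal (F s) ^ pp * ENNReal.ofReal (Wf s) := by
            refine le_trans (lintegral_mono_set ?_) (lintegral_union_le _ _ _)
            intro s hs
            by_cases h : s ∈ Ioo (0:ℝ) t
            · exact Or.inl h
            · exact Or.inr ⟨hs, h⟩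
        _ ≤ (∫⁻ s in Ioo (0:ℝ) t, min (σ s) ((n:ℝ≥0∞)+1)) + 0 := by
            refine add_le_add ?_ ?_
            · refine lintegral_mono_ae ?_
              rw [ae_restrict_iff' measurableSet_Ioo]
              exact ae_of_all _ hpt
            · refine le_of_eq ?_
              rw [setLIntegral_congr_fun_ae (measurableSet_Ioi.diff measurableSet_Ioo)
                (ae_of_all _ (fun s hs => ?_))]
              · exact lintegral_zero
              · show ENNReal.ofReal (F s) ^ pp * ENNReal.ofReal (Wf s) = (fun _ => (0:ℝ≥0∞)) s
                rw [hFz s hs.2, ENNReal.ofReal_zero, ENNReal.zero_rpow_of_pos hpp0, zero_mul]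
        _ = _ := add_zero _
    have hRHS₁ := hRHS σ₁ W₁ F₁ p₁ hp₁ hWpos₁ hσ₁ hofReal₁
      (fun s hs => by rw [hF₁]; simp only [if_neg hs])
    have hRHS₂ := hRHS σ₂ W₂ F₂ p₂ hp₂ hWpos₂ hσ₂ hofReal₂
      (fun s hs => by rw [hF₂]; simp only [if_neg hs])
    -- LHS bound
    have hinner₁ : ∀ τ, t ≤ τ → Vn₁ n ≤ ∫⁻ s in Ioo (0:ℝ) τ, ENNReal.ofReal (F₁ s) := by
      intro τ hτ
      calc Vn₁ n = ∫⁻ s in Ioo (0:ℝ) t, ENNReal.ofReal (F₁ s) :=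
            (setLIntegral_congr_fun_ae measurableSet_Ioo
              (ae_of_all _ (fun s hs => hofReal₁ s hs))).symm
        _ ≤ _ := lintegral_mono_set (Ioo_subset_Ioo_right hτ)
    have hinner₂ : ∀ τ, t ≤ τ → Vn₂ n ≤ ∫⁻ s in Ioo (0:ℝ) τ, ENNReal.ofReal (F₂ s) := by
      intro τ hτ
      calc Vn₂ n = ∫⁻ s in Ioo (0:ℝ) t, ENNReal.ofReal (F₂ s) :=
            (setLIntegral_congr_fun_ae measurableSet_Ioo
              (ae_of_all _ (fun s hs => hofReal₂ s hs))).symm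
        _ ≤ _ := lintegral_mono_set (Ioo_subset_Ioo_right hτ)
    have hLHS : Vn₁ n * Vn₂ n * (U1 W t) ^ (1/q) ≤
        (∫⁻ τ in Ioi (0:ℝ), ((∫⁻ s in Ioo (0:ℝ) τ, ENNReal.ofReal (F₁ s)) *
          (∫⁻ s in Ioo (0:ℝ) τ, ENNReal.ofReal (F₂ s))) ^ q *
          ENNReal.ofReal (W τ)) ^ (1/q) := by
      calc Vn₁ n * Vn₂ n * (U1 W t)^(1/q)
          = ((Vn₁ n * Vn₂ n) ^ q * U1 W t) ^ (1/q) := by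
            rw [ENNReal.mul_rpow_of_nonneg _ _ (by positivity), ← ENNReal.rpow_mul,
              mul_one_div_cancel (ne_of_gt hq0), ENNReal.rpow_one]
        _ ≤ (∫⁻ τ in Ioi t, ((∫⁻ s in Ioo (0:ℝ) τ, ENNReal.ofReal (F₁ s)) *
              (∫⁻ s in Ioo (0:ℝ) τ, ENNReal.ofReal (F₂ s))) ^ q *
              ENNReal.ofReal (W τ)) ^ (1/q) := by
            refine ENNReal.rpow_le_rpow ?_ (by positivity)
            rw [U1, ← lintegral_const_mul _ hW.ennreal_ofReal]
            refine lintegral_mono_ae ?_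
            rw [ae_restrict_iff' measurableSet_Ioi]
            refine ae_of_all _ fun τ hτ => ?_
            refine mul_le_mul_left ?_ _
            refine ENNReal.rpow_le_rpow ?_ (le_of_lt hq0)
            exact mul_le_mul' (hinner₁ τ (le_of_lt hτ)) (hinner₂ τ (le_of_lt hτ))
        _ ≤ _ := ENNReal.rpow_le_rpow
            (lintegral_mono_set (Ioi_subset_Ioi (le_of_lt ht))) (by positivity)
    have hmain : Vn₁ n * Vn₂ n * (U1 W t)^(1/q) ≤
        C * (Vn₁ n)^(1/p₁) * (Vn₂ n)^(1/p₂) := by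
      refine le_trans (le_trans hLHS (hBH F₁ F₂ hF₁m hF₂m hF₁nn hF₂nn)) ?_
      exact mul_le_mul' (mul_le_mul' le_rfl
        (ENNReal.rpow_le_rpow hRHS₁ (by positivity)))
        (ENNReal.rpow_le_rpow hRHS₂ (by positivity))
    -- finiteness/positivity of Vn
    have hVfin : ∀ (σ : ℝ → ℝ≥0∞),
        (∫⁻ s in Ioo (0:ℝ) t, min (σ s) ((n:ℝ≥0∞)+1)) ≠ ⊤ := by
      intro σ
      have : (∫⁻ s in Ioo (0:ℝ) t, min (σ s) ((n:ℝ≥0∞)+1)) ≤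
          ((n:ℝ≥0∞)+1) * volume (Ioo (0:ℝ) t) := by
        rw [← setLIntegral_const]
        exact lintegral_mono fun s => min_le_right _ _
      refine ne_top_of_le_ne_top ?_ this
      refine ENNReal.mul_ne_top (by simp) ?_
      rw [Real.volume_Ioo]
      exact ENNReal.ofReal_ne_top
    have hVn₁fin : Vn₁ n ≠ ⊤ := hVfin σ₁
    have hVn₂fin : Vn₂ n ≠ ⊤ := hVfin σ₂
    have hVn₁pos : Vn₁ n ≠ 0 := by
      refine (setLIntegral_Ioo_pos (hσ₁m.min measurable_const) ht ?_).ne'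
      intro s hs
      exact lt_min (hσ₁pos s hs).1 (lt_of_lt_of_le zero_lt_one le_add_self)
    have hVn₂pos : Vn₂ n ≠ 0 := by
      refine (setLIntegral_Ioo_pos (hσ₂m.min measurable_const) ht ?_).ne'
      intro s hs
      exact lt_min (hσ₂pos s hs).1 (lt_of_lt_of_le zero_lt_one le_add_self)
    -- divide
    have h2 := mul_le_mul_left hmain ((Vn₁ n)^(-(1/p₁)) * (Vn₂ n)^(-(1/p₂)))
    have e1 : Vn₁ n * Vn₂ n * (U1 W t)^(1/q) * ((Vn₁ n)^(-(1/p₁)) * (Vn₂ n)^(-(1/p₂)))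
        = (U1 W t)^(1/q) * (Vn₁ n * (Vn₁ n)^(-(1/p₁))) * (Vn₂ n * (Vn₂ n)^(-(1/p₂))) := by
      ring
    have e2 : C * (Vn₁ n)^(1/p₁) * (Vn₂ n)^(1/p₂) * ((Vn₁ n)^(-(1/p₁)) * (Vn₂ n)^(-(1/p₂)))
        = C * ((Vn₁ n)^(1/p₁) * (Vn₁ n)^(-(1/p₁))) * ((Vn₂ n)^(1/p₂) * (Vn₂ n)^(-(1/p₂))) := by
      ring
    rw [e1, e2, mul_rpow_neg hVn₁pos hVn₁fin, mul_rpow_neg hVn₂pos hVn₂fin,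
      cancel_rpow hVn₁pos hVn₁fin, cancel_rpow hVn₂pos hVn₂fin, mul_one, mul_one] at h2
    exact h2
  -- pass to the limit
  have hmono₁ : Monotone Vn₁ := by
    intro m n' hmn
    refine lintegral_mono fun s => min_le_min le_rfl ?_
    exact add_le_add_left (by exact_mod_cast hmn) 1
  have hmono₂ : Monotone Vn₂ := by
    intro m n' hmn
    refine lintegral_mono fun s => min_le_min le_rfl ?_
    exact add_le_add_left (by exact_mod_cast hmn) 1
  have hsup : ∀ (σ : ℝ → ℝ≥0∞), Measurable σ → (∀ s ∈ Ioo (0:ℝ) t, σ s ≠ ⊤) →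
      (⨆ n : ℕ, ∫⁻ s in Ioo (0:ℝ) t, min (σ s) ((n:ℝ≥0∞)+1)) = ∫⁻ s in Ioo (0:ℝ) t, σ s := by
    intro σ hσm hσt
    rw [← lintegral_iSup (fun n => hσm.min measurable_const)
      (fun m n' hmn s => min_le_min le_rfl (add_le_add_left (by exact_mod_cast hmn) 1))]
    refine setLIntegral_congr_fun_ae measurableSet_Ioo (ae_of_all _ fun s hs => ?_)
    obtain ⟨n, hn⟩ := ENNReal.exists_nat_gt (hσt s hs)
    apply le_antisymm
    · exact iSup_le fun m => min_le_left _ _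
    · refine le_iSup_of_le n ?_
      rw [min_eq_left (le_trans (le_of_lt hn) le_self_add)]
  have hsup₁ : (⨆ n, Vn₁ n) = V1 p₁ W₁ t := hsup σ₁ hσ₁m (fun s hs => (hσ₁pos s hs).2)
  have hsup₂ : (⨆ n, Vn₂ n) = V1 p₂ W₂ t := hsup σ₂ hσ₂m (fun s hs => (hσ₂pos s hs).2)
  have hc₁ : 1/(conjExp p₁) = 1 - 1/p₁ := by
    rw [conjExp, one_div_div]
    field_simp
  have hc₂ : 1/(conjExp p₂) = 1 - 1/p₂ := by
    rw [conjExp, one_div_div]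
    field_simp
  rw [hc₁, hc₂, ← hsup₁, ← hsup₂, rpow_iSup Vn₁ hmono₁ (by linarith),
    rpow_iSup Vn₂ hmono₂ (by linarith), ENNReal.mul_iSup (a := (U1 W t)^(1/q) * ⨆ n, (Vn₁ n)^(1-1/p₁))]
  refine iSup_le fun m => ?_
  rw [ENNReal.mul_iSup (a := (U1 W t)^(1/q)), ENNReal.iSup_mul]
  refine iSup_le fun n => ?_
  calc (U1 W t)^(1/q) * (Vn₁ n)^(1-1/p₁) * (Vn₂ m)^(1-1/p₂)
      ≤ (U1 W t)^(1/q) * (Vn₁ (max n m))^(1-1/p₁) * (Vn₂ (max n m))^(1-1/p₂) := by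
        refine mul_le_mul' (mul_le_mul' le_rfl ?_) ?_
        · exact ENNReal.rpow_le_rpow (hmono₁ (le_max_left n m)) (by linarith)
        · exact ENNReal.rpow_le_rpow (hmono₂ (le_max_right n m)) (by linarith)
    _ ≤ C := main (max n m)



lemma rpow_ne_zero'' {x : ℝ≥0∞} (hx0 : x ≠ 0) {c : ℝ} (hc : 0 ≤ c) : x ^ c ≠ 0 := by
  simp only [Ne, ENNReal.rpow_eq_zero_iff]
  push_neg
  exact ⟨fun h => absurd h hx0, fun _ => by linarith⟩

lemma sufficiency {p₁ p₂ q : ℝ} (hp₁ : 1 < p₁) (hp₂ : 1 < p₂) (hq : 1 < q)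
    (hq₁ : p₁ ≤ q) (hq₂ : p₂ ≤ q)
    {W W₁ W₂ : ℝ → ℝ} (hW : Measurable W) (hW₁ : Measurable W₁) (hW₂ : Measurable W₂)
    (hW₁pos : ∀ t ∈ Ioi (0:ℝ), 0 < W₁ t) (hW₂pos : ∀ t ∈ Ioi (0:ℝ), 0 < W₂ t)
    (hB : B1 p₁ p₂ q W W₁ W₂ < ⊤) :
    BilinearHardy p₁ p₂ q W W₁ W₂ (2048 * B1 p₁ p₂ q W W₁ W₂ + 1) := by
  have hq0 : (0:ℝ) < q := by linarith
  have hp₁0 : (0:ℝ) < p₁ := by linarith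
  have hp₂0 : (0:ℝ) < p₂ := by linarith
  have hp₁1 : (0:ℝ) < 1 - 1/p₁ := by
    have : 1/p₁ < 1 := by rw [div_lt_one hp₁0]; exact hp₁
    linarith
  have hp₂1 : (0:ℝ) < 1 - 1/p₂ := by
    have : 1/p₂ < 1 := by rw [div_lt_one hp₂0]; exact hp₂
    linarith
  have hc₁ : 1/(conjExp p₁) = 1 - 1/p₁ := by
    rw [conjExp, one_div_div]
    field_simp
  have hc₂ : 1/(conjExp p₂) = 1 - 1/p₂ := by
    rw [conjExp, one_div_div]
    field_simp
  set B := B1 p₁ p₂ q W W₁ W₂ with hBdef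
  have hBne : B ≠ ⊤ := lt_top_iff_ne_top.mp hB
  have hBt : ∀ t, 0 < t →
      (U1 W t)^(1/q) * (V1 p₁ W₁ t)^(1 - 1/p₁) * (V1 p₂ W₂ t)^(1 - 1/p₂) ≤ B := by
    intro t ht
    rw [← hc₁, ← hc₂]
    exact le_iSup₂_of_le t ht le_rfl
  intro F₁ F₂ hF₁m hF₂m hF₁nn hF₂nn
  set v₁ : ℝ → ℝ≥0∞ := fun x => ENNReal.ofReal (W₁ x) with hv₁
  set v₂ : ℝ → ℝ≥0∞ := fun x => ENNReal.ofReal (W₂ x) with hv₂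
  set σ₁ : ℝ → ℝ≥0∞ := fun x => (ENNReal.ofReal (W₁ x)) ^ (1 - conjExp p₁) with hσ₁
  set σ₂ : ℝ → ℝ≥0∞ := fun x => (ENNReal.ofReal (W₂ x)) ^ (1 - conjExp p₂) with hσ₂
  have hσ₁m : Measurable σ₁ := (hW₁.ennreal_ofReal).pow_const _
  have hσ₂m : Measurable σ₂ := (hW₂.ennreal_ofReal).pow_const _
  set f₁ : ℝ → ℝ≥0∞ := fun x => ENNReal.ofReal (F₁ x) with hf₁
  set f₂ : ℝ → ℝ≥0∞ := fun x => ENNReal.ofReal (F₂ x) with hf₂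
  have hf₁m : Measurable f₁ := hF₁m.ennreal_ofReal
  have hf₂m : Measurable f₂ := hF₂m.ennreal_ofReal
  set g₁ : ℝ → ℝ≥0∞ := fun x => f₁ x * (σ₁ x)⁻¹ with hg₁
  set g₂ : ℝ → ℝ≥0∞ := fun x => f₂ x * (σ₂ x)⁻¹ with hg₂
  have hg₁m : Measurable g₁ := hf₁m.mul hσ₁m.inv
  have hg₂m : Measurable g₂ := hf₂m.mul hσ₂m.inv
  -- pointwise identities on Ioi 0
  have hσprop : ∀ (Wf : ℝ → ℝ) (pp : ℝ), 1 < pp → ∀ x, 0 < Wf x →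
      ((ENNReal.ofReal (Wf x)) ^ (1 - conjExp pp) ≠ 0 ∧
        (ENNReal.ofReal (Wf x)) ^ (1 - conjExp pp) ≠ ⊤) := by
    intro Wf pp hpp x hx
    have h0 : ENNReal.ofReal (Wf x) ≠ 0 := (ENNReal.ofReal_pos.mpr hx).ne'
    exact ⟨rpow_ne_zero' h0 ENNReal.ofReal_ne_top _, rpow_ne_top' h0 ENNReal.ofReal_ne_top _⟩
  have hgσ₁ : ∀ x, 0 < x → g₁ x * σ₁ x = f₁ x := by
    intro x hx
    obtain ⟨h0, ht⟩ := hσprop W₁ p₁ hp₁ x (hW₁pos x hx)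
    rw [hg₁]
    simp only
    rw [mul_assoc, ENNReal.inv_mul_cancel h0 ht, mul_one]
  have hgσ₂ : ∀ x, 0 < x → g₂ x * σ₂ x = f₂ x := by
    intro x hx
    obtain ⟨h0, ht⟩ := hσprop W₂ p₂ hp₂ x (hW₂pos x hx)
    rw [hg₂]
    simp only
    rw [mul_assoc, ENNReal.inv_mul_cancel h0 ht, mul_one]
  have hconjprod₁ : (1 - conjExp p₁) * (1 - p₁) = 1 := by
    have hne : p₁ - 1 ≠ 0 := by linarith
    rw [conjExp, sub_mul, one_mul]
    field_simp
    ring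
  have hconjprod₂ : (1 - conjExp p₂) * (1 - p₂) = 1 := by
    have hne : p₂ - 1 ≠ 0 := by linarith
    rw [conjExp, sub_mul, one_mul]
    field_simp
    ring
  have hgp₁ : ∀ x, 0 < x → g₁ x ^ p₁ * σ₁ x = f₁ x ^ p₁ * v₁ x := by
    intro x hx
    obtain ⟨h0, ht⟩ := hσprop W₁ p₁ hp₁ x (hW₁pos x hx)
    rw [hg₁]
    simp only
    rw [ENNReal.mul_rpow_of_nonneg _ _ (le_of_lt hp₁0), ← ENNReal.rpow_neg_one (σ₁ x),
      ← ENNReal.rpow_mul, mul_assoc, neg_one_mul,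
      show -p₁ = (1 - p₁) - 1 by ring, rpow_sub_one_mul h0 ht,
      ← ENNReal.rpow_mul, hconjprod₁, ENNReal.rpow_one]
  have hgp₂ : ∀ x, 0 < x → g₂ x ^ p₂ * σ₂ x = f₂ x ^ p₂ * v₂ x := by
    intro x hx
    obtain ⟨h0, ht⟩ := hσprop W₂ p₂ hp₂ x (hW₂pos x hx)
    rw [hg₂]
    simp only
    rw [ENNReal.mul_rpow_of_nonneg _ _ (le_of_lt hp₂0), ← ENNReal.rpow_neg_one (σ₂ x),
      ← ENNReal.rpow_mul, mul_assoc, neg_one_mul,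
      show -p₂ = (1 - p₂) - 1 by ring, rpow_sub_one_mul h0 ht,
      ← ENNReal.rpow_mul, hconjprod₂, ENNReal.rpow_one]
  set X₁ : ℝ≥0∞ := ∫⁻ t in Ioi (0:ℝ), ENNReal.ofReal (F₁ t) ^ p₁ * ENNReal.ofReal (W₁ t)
    with hX₁def
  set X₂ : ℝ≥0∞ := ∫⁻ t in Ioi (0:ℝ), ENNReal.ofReal (F₂ t) ^ p₂ * ENNReal.ofReal (W₂ t)
    with hX₂def
  have hX₁g : X₁ = ∫⁻ x in Ioi (0:ℝ), g₁ x ^ p₁ * σ₁ x := by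
    rw [hX₁def]
    exact (setLIntegral_congr_fun_ae measurableSet_Ioi
      (ae_of_all _ (fun x hx => hgp₁ x hx))).symm
  have hX₂g : X₂ = ∫⁻ x in Ioi (0:ℝ), g₂ x ^ p₂ * σ₂ x := by
    rw [hX₂def]
    exact (setLIntegral_congr_fun_ae measurableSet_Ioi
      (ae_of_all _ (fun x hx => hgp₂ x hx))).symm
  -- degenerate cases
  by_cases hX₂0 : X₂ = 0
  · -- F₂ vanishes a.e., LHS = 0
    have hae : ∀ᵐ x ∂(volume.restrict (Ioi (0:ℝ))), f₂ x = 0 := by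
      have h0 := (lintegral_eq_zero_iff ((hf₂m.pow_const _).mul hW₂.ennreal_ofReal)).mp hX₂0
      filter_upwards [h0, ae_restrict_mem measurableSet_Ioi] with x hx hxm
      simp only [Pi.zero_apply] at hx
      rcases mul_eq_zero.mp hx with h | h
      · rcases ENNReal.rpow_eq_zero_iff.mp h with ⟨h', _⟩ | ⟨_, hneg⟩
        · exact h'
        · linarith
      · exact absurd h (ENNReal.ofReal_pos.mpr (hW₂pos x hxm)).ne'
    have hinner : ∀ t, 0 < t → (∫⁻ s in Ioo (0:ℝ) t, ENNReal.ofReal (F₂ s)) = 0 := by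
      intro t ht
      have h2 : ∀ᵐ x ∂(volume.restrict (Ioo (0:ℝ) t)), f₂ x = 0 :=
        ae_restrict_of_ae_restrict_of_subset (Ioo_subset_Ioi_self) hae
      calc (∫⁻ s in Ioo (0:ℝ) t, ENNReal.ofReal (F₂ s)) = ∫⁻ _ in Ioo (0:ℝ) t, 0 :=
            lintegral_congr_ae h2
        _ = 0 := lintegral_zero
    have hLHS0 : (∫⁻ t in Ioi (0:ℝ),
        ((∫⁻ s in Ioo (0:ℝ) t, ENNReal.ofReal (F₁ s)) *
          (∫⁻ s in Ioo (0:ℝ) t, ENNReal.ofReal (F₂ s))) ^ q *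
          ENNReal.ofReal (W t)) = 0 := by
      rw [setLIntegral_congr_fun_ae measurableSet_Ioi (ae_of_all _ (fun t ht => ?_))]
      · exact lintegral_zero
      · show _ = (fun _ => (0:ℝ≥0∞)) t
        rw [hinner t ht, mul_zero, ENNReal.zero_rpow_of_pos hq0, zero_mul]
    rw [hLHS0, ENNReal.zero_rpow_of_pos (by positivity)]
    exact zero_le
  by_cases hX₁0 : X₁ = 0
  · have hae : ∀ᵐ x ∂(volume.restrict (Ioi (0:ℝ))), f₁ x = 0 := by
      have h0 := (lintegral_eq_zero_iff ((hf₁m.pow_const _).mul hW₁.ennreal_ofReal)).mp hX₁0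
      filter_upwards [h0, ae_restrict_mem measurableSet_Ioi] with x hx hxm
      simp only [Pi.zero_apply] at hx
      rcases mul_eq_zero.mp hx with h | h
      · rcases ENNReal.rpow_eq_zero_iff.mp h with ⟨h', _⟩ | ⟨_, hneg⟩
        · exact h'
        · linarith
      · exact absurd h (ENNReal.ofReal_pos.mpr (hW₁pos x hxm)).ne'
    have hinner : ∀ t, 0 < t → (∫⁻ s in Ioo (0:ℝ) t, ENNReal.ofReal (F₁ s)) = 0 := by
      intro t ht
      have h2 : ∀ᵐ x ∂(volume.restrict (Ioo (0:ℝ) t)), f₁ x = 0 :=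
        ae_restrict_of_ae_restrict_of_subset (Ioo_subset_Ioi_self) hae
      calc (∫⁻ s in Ioo (0:ℝ) t, ENNReal.ofReal (F₁ s)) = ∫⁻ _ in Ioo (0:ℝ) t, 0 :=
            lintegral_congr_ae h2
        _ = 0 := lintegral_zero
    have hLHS0 : (∫⁻ t in Ioi (0:ℝ),
        ((∫⁻ s in Ioo (0:ℝ) t, ENNReal.ofReal (F₁ s)) *
          (∫⁻ s in Ioo (0:ℝ) t, ENNReal.ofReal (F₂ s))) ^ q *
          ENNReal.ofReal (W t)) = 0 := by
      rw [setLIntegral_congr_fun_ae measurableSet_Ioi (ae_of_all _ (fun t ht => ?_))]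
      · exact lintegral_zero
      · show _ = (fun _ => (0:ℝ≥0∞)) t
        rw [hinner t ht, zero_mul, ENNReal.zero_rpow_of_pos hq0, zero_mul]
    rw [hLHS0, ENNReal.zero_rpow_of_pos (by positivity)]
    exact zero_le
  by_cases hX₁t : X₁ = ⊤
  · -- RHS = ⊤
    have hRHSt : (2048 * B + 1) * X₁ ^ (1/p₁) * X₂ ^ (1/p₂) = ⊤ := by
      rw [hX₁t, ENNReal.top_rpow_of_pos (by positivity)]
      rw [ENNReal.mul_top (lt_of_lt_of_le zero_lt_one le_add_self).ne',
        ENNReal.top_mul (rpow_ne_zero'' hX₂0 (by positivity))]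
    rw [hRHSt]
    exact le_top
  by_cases hX₂t : X₂ = ⊤
  · have hRHSt : (2048 * B + 1) * X₁ ^ (1/p₁) * X₂ ^ (1/p₂) = ⊤ := by
      rw [hX₂t, ENNReal.top_rpow_of_pos (by positivity), ENNReal.mul_top (by
        intro h
        rcases mul_eq_zero.mp h with h' | h'
        · exact absurd h' (lt_of_lt_of_le zero_lt_one le_add_self).ne'
        · exact absurd h' (rpow_ne_zero'' hX₁0 (by positivity)))]
    rw [hRHSt]
    exact le_top
  -- main case
  set u : ℝ → ℝ≥0∞ := fun τ => ENNReal.ofReal (W τ) with hu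
  have hum : Measurable u := hW.ennreal_ofReal
  set G₂f : ℝ → ℝ≥0∞ := fun s => ∫⁻ x in Ioo (0:ℝ) s, f₂ x with hG₂f
  have hG₂mono : Monotone G₂f := fun s t hst =>
    lintegral_mono_set (Ioo_subset_Ioo_right hst)
  have hG₂meas : Measurable G₂f := hG₂mono.measurable
  set u' : ℝ → ℝ≥0∞ := fun τ => G₂f τ ^ q * u τ with hu'
  have hu'm : Measurable u' := (hG₂meas.pow_const _).mul hum
  set Y := B * X₂ ^ (1/p₂) with hY
  have hYne : Y ≠ ⊤ :=
    ENNReal.mul_ne_top hBne (ENNReal.rpow_ne_top_of_nonneg (by positivity) hX₂t)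
  -- Step I: tail estimate for Φ
  have hPhi : ∀ s, 0 < s →
      (∫⁻ τ in Ioi s, u' τ) ^ (1/q) * (V1 p₁ W₁ s) ^ (1 - 1/p₁) ≤ 128 * Y := by
    intro s hs
    set T1 := G₂f s ^ q * U1 W s with hT1
    set T2 := ∫⁻ τ in Ioi s, (∫⁻ x in Ioo s τ, f₂ x) ^ q * u τ with hT2
    have hGsm : Measurable (fun τ => ∫⁻ x in Ioo s τ, f₂ x) :=
      (by
        intro a b hab
        exact lintegral_mono_set (Ioo_subset_Ioo_right hab) :
        Monotone fun τ => ∫⁻ x in Ioo s τ, f₂ x).measurable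
    have hsplit : (∫⁻ τ in Ioi s, u' τ) ≤ 2^q * (T1 + T2) := by
      have hpt : ∀ τ, s < τ → u' τ ≤
          2^q * (G₂f s ^ q * u τ + (∫⁻ x in Ioo s τ, f₂ x) ^ q * u τ) := by
        intro τ hτ
        have hGle : G₂f τ ≤ G₂f s + ∫⁻ x in Ioo s τ, f₂ x := by
          rw [hG₂f]
          simp only
          calc ∫⁻ x in Ioo (0:ℝ) τ, f₂ x ≤ ∫⁻ x in Ioo (0:ℝ) s ∪ Ico s τ, f₂ x := by
                refine lintegral_mono_set fun x hx => ?_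
                rcases lt_or_ge x s with h | h
                · exact Or.inl ⟨hx.1, h⟩
                · exact Or.inr ⟨h, hx.2⟩
            _ ≤ (∫⁻ x in Ioo (0:ℝ) s, f₂ x) + ∫⁻ x in Ico s τ, f₂ x :=
                lintegral_union_le _ _ _
            _ ≤ (∫⁻ x in Ioo (0:ℝ) s, f₂ x) + ∫⁻ x in Ioo s τ, f₂ x := by
                refine add_le_add_right ?_ _
                calc ∫⁻ x in Ico s τ, f₂ x ≤ ∫⁻ x in {s} ∪ Ioo s τ, f₂ x := by
                      refine lintegral_mono_set fun x hx => ?_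
                      rcases eq_or_lt_of_le hx.1 with h | h
                      · exact Or.inl (by simp [← h])
                      · exact Or.inr ⟨h, hx.2⟩
                  _ ≤ (∫⁻ x in {s}, f₂ x) + ∫⁻ x in Ioo s τ, f₂ x := lintegral_union_le _ _ _
                  _ = ∫⁻ x in Ioo s τ, f₂ x := by
                      rw [setLIntegral_measure_zero _ _ (measure_singleton s), zero_add]
        calc u' τ = G₂f τ ^ q * u τ := rfl
          _ ≤ (G₂f s + ∫⁻ x in Ioo s τ, f₂ x) ^ q * u τ :=
              mul_le_mul_left (ENNReal.rpow_le_rpow hGle (le_of_lt hq0)) _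
          _ ≤ (2^q * (G₂f s ^ q + (∫⁻ x in Ioo s τ, f₂ x) ^ q)) * u τ :=
              mul_le_mul_left (add_rpow_le _ _ (le_of_lt hq0)) _
          _ = 2^q * (G₂f s ^ q * u τ + (∫⁻ x in Ioo s τ, f₂ x) ^ q * u τ) := by ring
      calc (∫⁻ τ in Ioi s, u' τ)
          ≤ ∫⁻ τ in Ioi s,
              2^q * (G₂f s ^ q * u τ + (∫⁻ x in Ioo s τ, f₂ x) ^ q * u τ) := by
            refine lintegral_mono_ae ?_
            rw [ae_restrict_iff' measurableSet_Ioi]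
            exact ae_of_all _ hpt
        _ = 2^q * ((∫⁻ τ in Ioi s, G₂f s ^ q * u τ) +
              ∫⁻ τ in Ioi s, (∫⁻ x in Ioo s τ, f₂ x) ^ q * u τ) := by
            rw [lintegral_const_mul (f := fun τ => G₂f s ^ q * u τ + (∫⁻ x in Ioo s τ, f₂ x) ^ q * u τ) _ ((measurable_const.mul hum).add
              ((hGsm.pow_const _).mul hum))]
            congr 1
            exact lintegral_add_left (measurable_const.mul hum) _
        _ = 2^q * (T1 + T2) := by
            rw [hT1, lintegral_const_mul _ hum]
            rfl
    -- T1 bound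
    have hG₂s : G₂f s ≤ X₂ ^ (1/p₂) * (V1 p₂ W₂ s) ^ (1 - 1/p₂) := by
      have he : G₂f s = ∫⁻ x in Ioo (0:ℝ) s, g₂ x * σ₂ x :=
        (setLIntegral_congr_fun_ae measurableSet_Ioo
          (ae_of_all _ (fun x hx => hgσ₂ x hx.1))).symm
      rw [he]
      refine le_trans (holder_on_set hp₂ g₂ σ₂ hg₂m hσ₂m (Ioo 0 s)) ?_
      refine mul_le_mul_left (ENNReal.rpow_le_rpow ?_ (by positivity)) _
      rw [hX₂g]
      exact lintegral_mono_set Ioo_subset_Ioi_self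
    have hT1bound : T1 ^ (1/q) * (V1 p₁ W₁ s) ^ (1 - 1/p₁) ≤ Y := by
      have hT1e : T1 ^ (1/q) = G₂f s * (U1 W s) ^ (1/q) := by
        rw [hT1, ENNReal.mul_rpow_of_nonneg _ _ (by positivity), ← ENNReal.rpow_mul,
          mul_one_div_cancel (ne_of_gt hq0), ENNReal.rpow_one]
      rw [hT1e]
      calc G₂f s * (U1 W s) ^ (1/q) * (V1 p₁ W₁ s) ^ (1 - 1/p₁)
          ≤ (X₂ ^ (1/p₂) * (V1 p₂ W₂ s) ^ (1 - 1/p₂)) * (U1 W s) ^ (1/q) *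
              (V1 p₁ W₁ s) ^ (1 - 1/p₁) :=
            mul_le_mul_left (mul_le_mul_left hG₂s _) _
        _ = X₂ ^ (1/p₂) * ((U1 W s) ^ (1/q) * (V1 p₁ W₁ s) ^ (1 - 1/p₁) *
              (V1 p₂ W₂ s) ^ (1 - 1/p₂)) := by ring
        _ ≤ X₂ ^ (1/p₂) * B := mul_le_mul_right (hBt s hs) _
        _ = Y := mul_comm _ _
    -- T2 bound via hardy_core at basepoint s
    have hV₁pos : (0:ℝ≥0∞) < V1 p₁ W₁ s := by
      refine setLIntegral_Ioo_pos hσ₁m hs ?_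
      intro x hx
      exact pos_iff_ne_zero.mpr (hσprop W₁ p₁ hp₁ x (hW₁pos x hx.1)).1
    set As := B * (V1 p₁ W₁ s) ^ (-(1 - 1/p₁)) with hAs
    have hAsne : As ≠ ⊤ := by
      refine ENNReal.mul_ne_top hBne ?_
      rw [ENNReal.rpow_neg]
      rw [Ne, ENNReal.inv_eq_top]
      exact rpow_ne_zero'' hV₁pos.ne' (by linarith)
    have hcore2hyp : ∀ r, s < r →
        (∫⁻ x in Ioi r, u x) ^ (1/q) * (∫⁻ x in Ioo s r, σ₂ x) ^ (1 - 1/p₂) ≤ As := by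
      intro r hr
      have hr0 : (0:ℝ) < r := lt_trans hs hr
      have h1 : (∫⁻ x in Ioo s r, σ₂ x) ≤ V1 p₂ W₂ r :=
        lintegral_mono_set (fun x hx => ⟨lt_trans hs hx.1, hx.2⟩)
      have h2 : (U1 W r) ^ (1/q) * (V1 p₂ W₂ r) ^ (1 - 1/p₂) *
          (V1 p₁ W₁ r) ^ (1 - 1/p₁) ≤ B := by
        calc (U1 W r) ^ (1/q) * (V1 p₂ W₂ r) ^ (1 - 1/p₂) * (V1 p₁ W₁ r) ^ (1 - 1/p₁)
            = (U1 W r) ^ (1/q) * (V1 p₁ W₁ r) ^ (1 - 1/p₁) *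
              (V1 p₂ W₂ r) ^ (1 - 1/p₂) := by ring
          _ ≤ B := hBt r hr0
      have hV₁rpos : (V1 p₁ W₁ r) ^ ((1:ℝ) - 1/p₁) ≠ 0 := by
        refine rpow_ne_zero'' ?_ (by linarith)
        refine (setLIntegral_Ioo_pos hσ₁m hr0 ?_).ne'
        intro x hx
        exact pos_iff_ne_zero.mpr (hσprop W₁ p₁ hp₁ x (hW₁pos x hx.1)).1
      have h3 := le_mul_inv_of_mul_le hV₁rpos hBne h2
      calc (∫⁻ x in Ioi r, u x) ^ (1/q) * (∫⁻ x in Ioo s r, σ₂ x) ^ (1 - 1/p₂)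
          ≤ (U1 W r) ^ (1/q) * (V1 p₂ W₂ r) ^ (1 - 1/p₂) :=
            mul_le_mul_right (ENNReal.rpow_le_rpow h1 (by linarith)) _
        _ ≤ B * ((V1 p₁ W₁ r) ^ ((1:ℝ) - 1/p₁))⁻¹ := h3
        _ = B * (V1 p₁ W₁ r) ^ (-(1 - 1/p₁)) := by rw [ENNReal.rpow_neg]
        _ ≤ As := by
            rw [hAs]
            refine mul_le_mul_right ?_ _
            rw [ENNReal.rpow_neg, ENNReal.rpow_neg]
            refine ENNReal.inv_le_inv.mpr ?_
            refine ENNReal.rpow_le_rpow ?_ (by linarith)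
            exact lintegral_mono_set (fun x hx => ⟨hx.1, lt_trans hx.2 hr⟩)
    have hcore2 := hardy_core hp₂ hq hq₂ s u σ₂ g₂ hum hσ₂m hg₂m hAsne hcore2hyp
    have hT2core : T2 ≤ 2^(4*q) * As^q * X₂^(q/p₂) := by
      have hT2e : T2 = ∫⁻ τ in Ioi s, (∫⁻ x in Ioo s τ, g₂ x * σ₂ x) ^ q * u τ := by
        rw [hT2]
        refine setLIntegral_congr_fun_ae measurableSet_Ioi (ae_of_all _ (fun τ hτ => ?_))
        congr 2
        refine setLIntegral_congr_fun_ae measurableSet_Ioo (ae_of_all _ (fun x hx => ?_))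
        exact (hgσ₂ x (lt_trans hs hx.1)).symm
      rw [hT2e]
      refine le_trans hcore2 ?_
      refine mul_le_mul_right (ENNReal.rpow_le_rpow ?_ (by positivity)) _
      rw [hX₂g]
      exact lintegral_mono_set (fun x hx => lt_trans hs hx)
    have hT2bound : T2 ^ (1/q) * (V1 p₁ W₁ s) ^ (1 - 1/p₁) ≤ 16 * Y := by
      have h161 : ((2:ℝ≥0∞)^(4*q) * As^q * X₂^(q/p₂)) ^ (1/q) =
          16 * As * X₂^(1/p₂) := by
        rw [ENNReal.mul_rpow_of_nonneg _ _ (by positivity),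
          ENNReal.mul_rpow_of_nonneg _ _ (by positivity),
          ← ENNReal.rpow_mul (2:ℝ≥0∞), ← ENNReal.rpow_mul As, ← ENNReal.rpow_mul X₂,
          show (4*q) * (1/q) = 4 by field_simp,
          show q * (1/q) = 1 by field_simp,
          show (q/p₂) * (1/q) = 1/p₂ by field_simp,
          ENNReal.rpow_one,
          show (2:ℝ≥0∞)^(4:ℝ) = 16 by
            rw [show (4:ℝ) = ((4:ℕ):ℝ) by norm_num, ENNReal.rpow_natCast]
            norm_num]
      calc T2 ^ (1/q) * (V1 p₁ W₁ s) ^ (1 - 1/p₁)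
          ≤ (2^(4*q) * As^q * X₂^(q/p₂)) ^ (1/q) * (V1 p₁ W₁ s) ^ (1 - 1/p₁) :=
            mul_le_mul_left (ENNReal.rpow_le_rpow hT2core (by positivity)) _
        _ = 16 * As * X₂^(1/p₂) * (V1 p₁ W₁ s) ^ (1 - 1/p₁) := by rw [h161]
        _ = 16 * B * X₂^(1/p₂) *
            ((V1 p₁ W₁ s) ^ (-(1 - 1/p₁)) * (V1 p₁ W₁ s) ^ (1 - 1/p₁)) := by
            rw [hAs]; ring
        _ ≤ 16 * B * X₂^(1/p₂) * 1 :=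
            mul_le_mul_right (rpow_neg_mul_rpow_le_one _ _) _
        _ = 16 * Y := by rw [mul_one, hY, mul_assoc]
    -- combine
    have h2q : ((2:ℝ≥0∞)^q) ^ (1/q) = 2 := by
      rw [← ENNReal.rpow_mul, mul_one_div_cancel (ne_of_gt hq0), ENNReal.rpow_one]
    calc (∫⁻ τ in Ioi s, u' τ) ^ (1/q) * (V1 p₁ W₁ s) ^ (1 - 1/p₁)
        ≤ (2^q * (T1 + T2)) ^ (1/q) * (V1 p₁ W₁ s) ^ (1 - 1/p₁) :=
          mul_le_mul_left (ENNReal.rpow_le_rpow hsplit (by positivity)) _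
      _ = 2 * (T1 + T2) ^ (1/q) * (V1 p₁ W₁ s) ^ (1 - 1/p₁) := by
          rw [ENNReal.mul_rpow_of_nonneg _ _ (by positivity), h2q]
      _ ≤ 2 * (2 * (T1 ^ (1/q) + T2 ^ (1/q))) * (V1 p₁ W₁ s) ^ (1 - 1/p₁) := by
          refine mul_le_mul_left (mul_le_mul_right ?_ _) _
          refine le_trans (add_rpow_le T1 T2 (by positivity)) ?_
          refine mul_le_mul_left ?_ _
          calc (2:ℝ≥0∞) ^ (1/q) ≤ 2 ^ (1:ℝ) :=
                ENNReal.rpow_le_rpow_of_exponent_le (by norm_num)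
                  (by rw [div_le_one hq0]; linarith)
            _ = 2 := ENNReal.rpow_one 2
      _ = 4 * (T1 ^ (1/q) * (V1 p₁ W₁ s) ^ (1 - 1/p₁) +
            T2 ^ (1/q) * (V1 p₁ W₁ s) ^ (1 - 1/p₁)) := by ring
      _ ≤ 4 * (Y + 16 * Y) := by
          refine mul_le_mul_right (add_le_add hT1bound hT2bound) _
      _ ≤ 128 * Y := by
          calc (4:ℝ≥0∞) * (Y + 16 * Y) ≤ 4 * (16 * Y + 16 * Y) := by
                refine mul_le_mul_right (add_le_add_left ?_ _) _
                calc Y = 1 * Y := (one_mul Y).symm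
                  _ ≤ 16 * Y := mul_le_mul_left (by norm_num) _
            _ = 128 * Y := by ring
  -- outer application of hardy_core
  have hAoutne : (128 : ℝ≥0∞) * Y ≠ ⊤ := ENNReal.mul_ne_top (by simp) hYne
  have hcore1 := hardy_core hp₁ hq hq₁ 0 u' σ₁ g₁ hu'm hσ₁m hg₁m hAoutne
    (fun s hs => hPhi s hs)
  -- identify LHS
  have hLHSe : (∫⁻ t in Ioi (0:ℝ),
      ((∫⁻ s in Ioo (0:ℝ) t, ENNReal.ofReal (F₁ s)) *
        (∫⁻ s in Ioo (0:ℝ) t, ENNReal.ofReal (F₂ s))) ^ q * ENNReal.ofReal (W t)) =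
      ∫⁻ t in Ioi (0:ℝ), (∫⁻ x in Ioo (0:ℝ) t, g₁ x * σ₁ x) ^ q * u' t := by
    refine setLIntegral_congr_fun_ae measurableSet_Ioi (ae_of_all _ (fun t ht => ?_))
    have hin : (∫⁻ s in Ioo (0:ℝ) t, ENNReal.ofReal (F₁ s)) =
        ∫⁻ x in Ioo (0:ℝ) t, g₁ x * σ₁ x :=
      (setLIntegral_congr_fun_ae measurableSet_Ioo
        (ae_of_all _ (fun x hx => hgσ₁ x hx.1))).symm
    rw [hin, hu']
    simp only
    rw [ENNReal.mul_rpow_of_nonneg _ _ (le_of_lt hq0)]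
    ring
  have hfinal : (∫⁻ t in Ioi (0:ℝ),
      ((∫⁻ s in Ioo (0:ℝ) t, ENNReal.ofReal (F₁ s)) *
        (∫⁻ s in Ioo (0:ℝ) t, ENNReal.ofReal (F₂ s))) ^ q *
        ENNReal.ofReal (W t)) ^ (1/q) ≤ 16 * (128 * Y) * X₁ ^ (1/p₁) := by
    rw [hLHSe]
    calc (∫⁻ t in Ioi (0:ℝ), (∫⁻ x in Ioo (0:ℝ) t, g₁ x * σ₁ x) ^ q * u' t) ^ (1/q)
        ≤ (2^(4*q) * (128*Y)^q * (∫⁻ x in Ioi (0:ℝ), g₁ x ^ p₁ * σ₁ x)^(q/p₁)) ^ (1/q) :=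
          ENNReal.rpow_le_rpow hcore1 (by positivity)
      _ = 16 * (128 * Y) * X₁ ^ (1/p₁) := by
          rw [← hX₁g, ENNReal.mul_rpow_of_nonneg _ _ (by positivity),
            ENNReal.mul_rpow_of_nonneg _ _ (by positivity),
            ← ENNReal.rpow_mul (2:ℝ≥0∞), ← ENNReal.rpow_mul (128*Y), ← ENNReal.rpow_mul X₁,
            show (4*q) * (1/q) = 4 by field_simp,
            show q * (1/q) = 1 by field_simp,
            show (q/p₁) * (1/q) = 1/p₁ by field_simp,
            ENNReal.rpow_one,
            show (2:ℝ≥0∞)^(4:ℝ) = 16 by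
              rw [show (4:ℝ) = ((4:ℕ):ℝ) by norm_num, ENNReal.rpow_natCast]
              norm_num]
  refine le_trans hfinal ?_
  calc (16:ℝ≥0∞) * (128 * Y) * X₁ ^ (1/p₁)
      = (2048 * B) * X₁ ^ (1/p₁) * X₂ ^ (1/p₂) := by
        rw [hY]
        ring
    _ ≤ (2048 * B + 1) * X₁ ^ (1/p₁) * X₂ ^ (1/p₂) := by
        refine mul_le_mul_left (mul_le_mul_left le_self_add _) _


end BH

end BHaux

/-- for `1 < p₁, p₂ ≤ q < ∞`, the weighted bilinear Hardy inequality holds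
for some finite constant `C > 0` iff `B₁ < ∞`. -/
theorem statement0 (p₁ p₂ q : ℝ) (hp₁ : 1 < p₁) (hp₂ : 1 < p₂) (hq : 1 < q)
    (hpq : max p₁ p₂ ≤ q)
    (W W₁ W₂ : ℝ → ℝ)
    (hW : Measurable W) (hW₁ : Measurable W₁) (hW₂ : Measurable W₂)
    (hWpos : ∀ t ∈ Ioi (0:ℝ), 0 < W t)
    (hW₁pos : ∀ t ∈ Ioi (0:ℝ), 0 < W₁ t)
    (hW₂pos : ∀ t ∈ Ioi (0:ℝ), 0 < W₂ t) :
    (∃ C : ℝ≥0∞, 0 < C ∧ C < ⊤ ∧ BilinearHardy p₁ p₂ q W W₁ W₂ C) ↔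
      B1 p₁ p₂ q W W₁ W₂ < ⊤ := by
  constructor
  · rintro ⟨C, _, hCt, hBH⟩
    exact lt_of_le_of_lt
      (BH.necessity hp₁ hp₂ hq hW hW₁ hW₂ hW₁pos hW₂pos hBH) hCt
  · intro hB
    refine ⟨2048 * B1 p₁ p₂ q W W₁ W₂ + 1, ?_, ?_, ?_⟩
    · exact lt_of_lt_of_le zero_lt_one le_add_self
    · rw [lt_top_iff_ne_top]
      exact ENNReal.add_ne_top.mpr
        ⟨ENNReal.mul_ne_top (by simp) (lt_top_iff_ne_top.mp hB), one_ne_top⟩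
    · exact BH.sufficiency hp₁ hp₂ hq (le_trans (le_max_left _ _) hpq)
        (le_trans (le_max_right _ _) hpq) hW hW₁ hW₂ hW₁pos hW₂pos hB
end
end

section
/- Let n ≥ 1, let p₁, p₂, q > 1 with q < p₂, define r₂ by 1/r₂ = 1/q − 1/p₂, and let u, v₁, v₂ be measurable functions on ℝⁿ, positive almost everywhere, with u ∈ L¹_loc(ℝⁿ\{0}) and vᵢ^{1−pᵢ'} ∈ L¹_loc(ℝⁿ). Then sup_{x ≠ 0} V₁(x)^{1/p₁'} (∫_{{y : |y| ≥ |x|}} U(y)^{r₂/q} V₂(y)^{r₂/q'} v₂(y)^{1−p₂'} dy)^{1/r₂} = sup_{r > 0} (∫₀^r Ṽ₁(s)^{1−p₁'} ds)^{1/p₁'} (∫_r^∞ (∫_t^∞ Ũ(s) ds)^{r₂/q} (∫₀^t Ṽ₂(s)^{1−p₂'} ds)^{r₂/q'} Ṽ₂(t)^{1−p₂'} dt)^{1/r₂}, where U(x) = ∫_{{y : |y| ≥ |x|}} u(y) dy, Vᵢ(x) = ∫_{B(0,|x|)} vᵢ(y)^{1−pᵢ'} dy, Ũ(r) = r^{n−1}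 ∫_{S^{n−1}} u(rω) dσ(ω), and Ṽᵢ(r) = (r^{n−1} ∫_{S^{n−1}} vᵢ(rω)^{1−pᵢ'} dσ(ω))^{1−pᵢ}. -/
open MeasureTheory Set ENNReal Metric

noncomputable section

/-- `ℝⁿ` as a Euclidean space. -/
abbrev Euc (n : ℕ) := EuclideanSpace ℝ (Fin n)

/-- The bilinear ball Hardy inequality on `ℝⁿ` with weights `u, v₁, v₂` and constant `C`:
`(∫ H₂^B(f₁,f₂)(x)^q u(x) dx)^{1/q}`
  `≤ C (∫ f₁^{p₁} v₁)^{1/p₁} (∫ f₂^{p₂} v₂)^{1/p₂}`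
for all measurable `f₁, f₂ ≥ 0`, where
`H₂^B(f₁,f₂)(x) = (∫_{B(0,|x|)} f₁)(∫_{B(0,|x|)} f₂)`. -/
def BallHardy (n : ℕ) (p₁ p₂ q : ℝ) (u v₁ v₂ : Euc n → ℝ) (C : ℝ≥0∞) : Prop :=
  ∀ f₁ f₂ : Euc n → ℝ, Measurable f₁ → Measurable f₂ →
    (∀ x, 0 ≤ f₁ x) → (∀ x, 0 ≤ f₂ x) →
    (∫⁻ x, ((∫⁻ y in ball (0 : Euc n) ‖x‖, ENNReal.ofReal (f₁ y)) *
          (∫⁻ y in ball (0 : Euc n) ‖x‖, ENNReal.ofReal (f₂ y))) ^ q *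
        ENNReal.ofReal (u x)) ^ (1 / q) ≤
      C * (∫⁻ x, ENNReal.ofReal (f₁ x) ^ p₁ * ENNReal.ofReal (v₁ x)) ^ (1 / p₁) *
        (∫⁻ x, ENNReal.ofReal (f₂ x) ^ p₂ * ENNReal.ofReal (v₂ x)) ^ (1 / p₂)

/-- `U(x) = ∫_{|y| ≥ |x|} u(y) dy`. -/
def Ufun (n : ℕ) (u : Euc n → ℝ) (x : Euc n) : ℝ≥0∞ :=
  ∫⁻ y in {y : Euc n | ‖x‖ ≤ ‖y‖}, ENNReal.ofReal (u y)

/-- `Vᵢ(x) = ∫_{B(0,|x|)} vᵢ(y)^{1-pᵢ'} dy`. -/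
def Vfun (n : ℕ) (p : ℝ) (v : Euc n → ℝ) (x : Euc n) : ℝ≥0∞ :=
  ∫⁻ y in ball (0 : Euc n) ‖x‖, ENNReal.ofReal (v y) ^ (1 - conjExp p)

/-- `D₂ = sup_{x ≠ 0} V₁(x)^{1/p₁'}
(∫_{|y| ≥ |x|} U(y)^{r₂/q} V₂(y)^{r₂/q'} v₂(y)^{1-p₂'} dy)^{1/r₂}`. -/
def D2 (n : ℕ) (p₁ p₂ q r₂ : ℝ) (u v₁ v₂ : Euc n → ℝ) : ℝ≥0∞ :=
  ⨆ (x : Euc n) (_ : x ≠ 0),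
    Vfun n p₁ v₁ x ^ (1 / conjExp p₁) *
      (∫⁻ y in {y : Euc n | ‖x‖ ≤ ‖y‖},
          Ufun n u y ^ (r₂ / q) * Vfun n p₂ v₂ y ^ (r₂ / conjExp q) *
            ENNReal.ofReal (v₂ y) ^ (1 - conjExp p₂)) ^ (1 / r₂)

/-- The surface measure on the unit sphere `S^{n-1} ⊂ ℝⁿ`. -/
def sphereMeasure (n : ℕ) : Measure (sphere (0 : Euc n) 1) :=
  (volume : Measure (Euc n)).toSphere

/-- `Ũ(r) = r^{n-1} ∫_{S^{n-1}} u(rω) dσ(ω)`. -/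
def Ut (n : ℕ) (u : Euc n → ℝ) (r : ℝ) : ℝ≥0∞ :=
  ENNReal.ofReal r ^ ((n : ℝ) - 1) *
    ∫⁻ ω, ENNReal.ofReal (u (r • (ω : Euc n))) ∂(sphereMeasure n)

/-- `Ṽᵢ(r) = (r^{n-1} ∫_{S^{n-1}} vᵢ(rω)^{1-pᵢ'} dσ(ω))^{1-pᵢ}`. -/
def Vt (n : ℕ) (p : ℝ) (v : Euc n → ℝ) (r : ℝ) : ℝ≥0∞ :=
  (ENNReal.ofReal r ^ ((n : ℝ) - 1) *
      ∫⁻ ω, ENNReal.ofReal (v (r • (ω : Euc n))) ^ (1 - conjExp p) ∂(sphereMeasure n)) ^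
    (1 - p)

lemma polar_lintegral {n : ℕ} (hn : 1 ≤ n) (g : Euc n → ℝ≥0∞) (hg : Measurable g) :
    ∫⁻ x, g x =
      ∫⁻ r in Ioi (0:ℝ), ENNReal.ofReal r ^ ((n : ℝ) - 1) *
        ∫⁻ ω, g (r • (ω : Euc n)) ∂(sphereMeasure n) := by
  haveI : Nontrivial (Euc n) := by
    refine ⟨⟨EuclideanSpace.single ⟨0, hn⟩ 1, 0, ?_⟩⟩
    intro h
    have := congrArg (fun f : Euc n => f ⟨0, hn⟩) h
    simp [EuclideanSpace.single] at this
  have hdim : Module.finrank ℝ (Euc n) = n := finrank_euclideanSpace_fin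
  haveI : IsFiniteMeasure (sphereMeasure n) := by unfold sphereMeasure; infer_instance
  have hf : Measurable fun p : sphere (0 : Euc n) 1 × Ioi (0:ℝ) =>
      g ((p.2 : ℝ) • (p.1 : Euc n)) :=
    hg.comp ((measurable_subtype_coe.comp measurable_snd).smul
      (measurable_subtype_coe.comp measurable_fst))
  calc ∫⁻ x, g x
      = ∫⁻ x in ({(0:Euc n)}ᶜ : Set (Euc n)), g x := by
        rw [restrict_compl_singleton (0 : Euc n)]
    _ = ∫⁻ x : ({(0:Euc n)}ᶜ : Set (Euc n)), g x ∂((volume : Measure (Euc n)).comap Subtype.val) := by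
        rw [lintegral_subtype_comap (measurableSet_singleton _).compl]
    _ = ∫⁻ p : sphere (0 : Euc n) 1 × Ioi (0:ℝ), g ((p.2 : ℝ) • (p.1 : Euc n))
          ∂((volume : Measure (Euc n)).toSphere.prod
              (Measure.volumeIoiPow (Module.finrank ℝ (Euc n) - 1))) := by
        rw [← (volume : Measure (Euc n)).measurePreserving_homeomorphUnitSphereProd.lintegral_comp
          hf]
        refine lintegral_congr fun x => ?_
        congr 1
        simp [homeomorphUnitSphereProd_apply_snd_coe, homeomorphUnitSphereProd_apply_fst_coe,
          smul_inv_smul₀ (norm_ne_zero_iff.2 x.2)]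
    _ = ∫⁻ r : Ioi (0:ℝ), (∫⁻ ω, g ((r : ℝ) • (ω : Euc n)) ∂(sphereMeasure n))
          ∂(Measure.volumeIoiPow (Module.finrank ℝ (Euc n) - 1)) := by
        rw [lintegral_prod_symm _ hf.aemeasurable]; rfl
    _ = ∫⁻ r : Ioi (0:ℝ), ENNReal.ofReal ((r:ℝ) ^ (Module.finrank ℝ (Euc n) - 1)) *
          (∫⁻ ω, g ((r : ℝ) • (ω : Euc n)) ∂(sphereMeasure n))
          ∂((volume : Measure ℝ).comap Subtype.val) := by
        rw [Measure.volumeIoiPow, lintegral_withDensity_eq_lintegral_mul]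
        · rfl
        · exact (measurable_subtype_coe.pow_const _).ennreal_ofReal
        · exact Measurable.lintegral_prod_left
            (f := fun (ω : sphere (0:Euc n) 1) (r : Ioi (0:ℝ)) => g ((r : ℝ) • (ω : Euc n))) hf
    _ = ∫⁻ r in Ioi (0:ℝ), ENNReal.ofReal (r ^ (Module.finrank ℝ (Euc n) - 1)) *
          (∫⁻ ω, g (r • (ω : Euc n)) ∂(sphereMeasure n)) := by
        exact lintegral_subtype_comap measurableSet_Ioi
          (fun r : ℝ => ENNReal.ofReal (r ^ (Module.finrank ℝ (Euc n) - 1)) *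
            ∫⁻ ω, g (r • (ω : Euc n)) ∂(sphereMeasure n))
    _ = _ := by
        refine setLIntegral_congr_fun measurableSet_Ioi (fun r hr => ?_)
        congr 1
        rw [hdim, ← Real.rpow_natCast r (n-1), ENNReal.ofReal_rpow_of_pos hr]
        congr 1
        rw [Nat.cast_sub hn, Nat.cast_one]

lemma polar_set {n : ℕ} (hn : 1 ≤ n) {S : Set ℝ} (hS : MeasurableSet S)
    (g : Euc n → ℝ≥0∞) (hg : Measurable g) :
    ∫⁻ y in {y : Euc n | ‖y‖ ∈ S}, g y =
      ∫⁻ r in Ioi (0:ℝ) ∩ S, ENNReal.ofReal r ^ ((n:ℝ)-1) *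
        ∫⁻ ω, g (r • (ω : Euc n)) ∂(sphereMeasure n) := by
  have hSm : MeasurableSet {y : Euc n | ‖y‖ ∈ S} := measurable_norm hS
  rw [← lintegral_indicator hSm, polar_lintegral hn _ (Measurable.indicator hg hSm)]
  have key : ∀ r ∈ Ioi (0:ℝ),
      ENNReal.ofReal r ^ ((n:ℝ)-1) *
        ∫⁻ ω, ({y : Euc n | ‖y‖ ∈ S}.indicator g) (r • (ω : Euc n)) ∂(sphereMeasure n) =
      S.indicator (fun r => ENNReal.ofReal r ^ ((n:ℝ)-1) *
        ∫⁻ ω, g (r • (ω : Euc n)) ∂(sphereMeasure n)) r := by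
    intro r hr
    have hnorm : ∀ ω : sphere (0:Euc n) 1, ‖r • (ω : Euc n)‖ = r := fun ω => by
      rw [norm_smul, mem_sphere_zero_iff_norm.mp ω.2, mul_one, Real.norm_eq_abs,
        abs_of_pos hr]
    by_cases hrS : r ∈ S
    · rw [indicator_of_mem hrS]
      congr 1
      refine lintegral_congr fun ω => ?_
      rw [indicator_of_mem]
      exact mem_setOf.mpr ((hnorm ω).symm ▸ hrS)
    · rw [indicator_of_notMem hrS]
      have : ∀ ω : sphere (0:Euc n) 1,
          ({y : Euc n | ‖y‖ ∈ S}.indicator g) (r • (ω : Euc n)) = 0 := fun ω => by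
        rw [indicator_of_notMem]
        exact fun h => hrS ((hnorm ω) ▸ h)
      simp [lintegral_congr this]
  rw [setLIntegral_congr_fun measurableSet_Ioi key, lintegral_indicator hS,
    Measure.restrict_restrict hS, inter_comm S (Ioi 0)]

lemma Vt_pow {n : ℕ} {p : ℝ} (hp : 1 < p) (v : Euc n → ℝ) (s : ℝ) :
    Vt n p v s ^ (1 - conjExp p) =
      ENNReal.ofReal s ^ ((n : ℝ) - 1) *
        ∫⁻ ω, ENNReal.ofReal (v (s • (ω : Euc n))) ^ (1 - conjExp p) ∂(sphereMeasure n) := by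
  rw [Vt, ← ENNReal.rpow_mul]
  have : (1 - p) * (1 - conjExp p) = 1 := by
    have h : p - 1 ≠ 0 := by linarith
    rw [conjExp]
    field_simp
    ring
  rw [this, ENNReal.rpow_one]

lemma Ufun_radial {n : ℕ} (hn : 1 ≤ n) (u : Euc n → ℝ) (hu : Measurable u)
    {t : ℝ} (ht : 0 < t) :
    ∫⁻ y in {y : Euc n | t ≤ ‖y‖}, ENNReal.ofReal (u y) = ∫⁻ s in Ioi t, Ut n u s := by
  have : {y : Euc n | t ≤ ‖y‖} = {y : Euc n | ‖y‖ ∈ Ici t} := rfl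
  rw [this, polar_set hn measurableSet_Ici _ hu.ennreal_ofReal]
  have h1 : Ioi (0:ℝ) ∩ Ici t = Ici t :=
    inter_eq_right.2 fun x hx => lt_of_lt_of_le ht hx
  rw [h1, ← setLIntegral_congr (Ioi_ae_eq_Ici (a := t))]
  rfl

lemma Vfun_radial {n : ℕ} (hn : 1 ≤ n) {p : ℝ} (hp : 1 < p) (v : Euc n → ℝ)
    (hv : Measurable v) (t : ℝ) :
    ∫⁻ y in ball (0 : Euc n) t, ENNReal.ofReal (v y) ^ (1 - conjExp p) =
      ∫⁻ s in Ioo 0 t, Vt n p v s ^ (1 - conjExp p) := by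
  have hb : ball (0 : Euc n) t = {y : Euc n | ‖y‖ ∈ Iio t} := by
    ext y; simp only [mem_ball_zero_iff, mem_setOf_eq, mem_Iio]
  have hg : Measurable fun y : Euc n => ENNReal.ofReal (v y) ^ (1 - conjExp p) :=
    ENNReal.continuous_rpow_const.measurable.comp hv.ennreal_ofReal
  rw [hb, polar_set hn measurableSet_Iio _ hg, Ioi_inter_Iio]
  exact setLIntegral_congr_fun measurableSet_Ioo
    (fun s _ => (Vt_pow hp v s).symm)

lemma measurable_Ufun {n : ℕ} (u : Euc n → ℝ) (hu : Measurable u) :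
    Measurable (Ufun n u) := by
  have hset : MeasurableSet {p : Euc n × Euc n | ‖p.1‖ ≤ ‖p.2‖} :=
    measurableSet_le measurable_fst.norm measurable_snd.norm
  have hF : Measurable fun p : Euc n × Euc n =>
      {p : Euc n × Euc n | ‖p.1‖ ≤ ‖p.2‖}.indicator
        (fun p => ENNReal.ofReal (u p.2)) p :=
    ((hu.comp measurable_snd).ennreal_ofReal).indicator hset
  have heq : Ufun n u = fun x => ∫⁻ y,
      {p : Euc n × Euc n | ‖p.1‖ ≤ ‖p.2‖}.indicator
        (fun p => ENNReal.ofReal (u p.2)) (x, y) := by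
    funext x
    rw [Ufun, ← lintegral_indicator (measurableSet_le measurable_const measurable_norm)]
    refine lintegral_congr fun y => ?_
    simp only [indicator_apply, mem_setOf_eq]
  rw [heq]
  exact Measurable.lintegral_prod_right
    (f := fun x y => {p : Euc n × Euc n | ‖p.1‖ ≤ ‖p.2‖}.indicator
      (fun p => ENNReal.ofReal (u p.2)) (x, y)) hF

lemma measurable_Vfun {n : ℕ} (p : ℝ) (v : Euc n → ℝ) (hv : Measurable v) :
    Measurable (Vfun n p v) := by
  have hset : MeasurableSet {q : Euc n × Euc n | ‖q.2‖ < ‖q.1‖} :=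
    measurableSet_lt measurable_snd.norm measurable_fst.norm
  have hF : Measurable fun q : Euc n × Euc n =>
      {q : Euc n × Euc n | ‖q.2‖ < ‖q.1‖}.indicator
        (fun q => ENNReal.ofReal (v q.2) ^ (1 - conjExp p)) q :=
    (ENNReal.continuous_rpow_const.measurable.comp
      ((hv.comp measurable_snd).ennreal_ofReal)).indicator hset
  have heq : Vfun n p v = fun x => ∫⁻ y,
      {q : Euc n × Euc n | ‖q.2‖ < ‖q.1‖}.indicator
        (fun q => ENNReal.ofReal (v q.2) ^ (1 - conjExp p)) (x, y) := by
    funext x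
    rw [Vfun, ← lintegral_indicator measurableSet_ball]
    refine lintegral_congr fun y => ?_
    by_cases h : ‖y‖ < ‖x‖ <;> simp [Set.indicator, mem_ball_zero_iff, h]
  rw [heq]
  exact Measurable.lintegral_prod_right
    (f := fun x y => {q : Euc n × Euc n | ‖q.2‖ < ‖q.1‖}.indicator
      (fun q => ENNReal.ofReal (v q.2) ^ (1 - conjExp p)) (x, y)) hF

lemma big_radial {n : ℕ} (hn : 1 ≤ n) {p₂ : ℝ} (q r₂ : ℝ) (hp₂ : 1 < p₂)
    (u v₂ : Euc n → ℝ) (hu : Measurable u) (hv₂ : Measurable v₂)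
    {t : ℝ} (ht : 0 < t) :
    (∫⁻ y in {y : Euc n | t ≤ ‖y‖},
        Ufun n u y ^ (r₂ / q) * Vfun n p₂ v₂ y ^ (r₂ / conjExp q) *
          ENNReal.ofReal (v₂ y) ^ (1 - conjExp p₂)) =
      ∫⁻ s in Ioi t,
        (∫⁻ a in Ioi s, Ut n u a) ^ (r₂ / q) *
          (∫⁻ a in Ioo (0:ℝ) s, Vt n p₂ v₂ a ^ (1 - conjExp p₂)) ^ (r₂ / conjExp q) *
            Vt n p₂ v₂ s ^ (1 - conjExp p₂) := by
  have hg : Measurable fun y : Euc n =>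
      Ufun n u y ^ (r₂ / q) * Vfun n p₂ v₂ y ^ (r₂ / conjExp q) *
        ENNReal.ofReal (v₂ y) ^ (1 - conjExp p₂) :=
    ((ENNReal.continuous_rpow_const.measurable.comp (measurable_Ufun u hu)).mul
      (ENNReal.continuous_rpow_const.measurable.comp (measurable_Vfun p₂ v₂ hv₂))).mul
      (ENNReal.continuous_rpow_const.measurable.comp hv₂.ennreal_ofReal)
  have : {y : Euc n | t ≤ ‖y‖} = {y : Euc n | ‖y‖ ∈ Ici t} := rfl
  have hinter : Ioi (0:ℝ) ∩ Ici t = Ici t :=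
    inter_eq_right.2 fun x (hx : x ∈ Ici t) => lt_of_lt_of_le ht hx
  rw [this, polar_set hn measurableSet_Ici _ hg, hinter,
    ← setLIntegral_congr (Ioi_ae_eq_Ici (a := t))]
  refine setLIntegral_congr_fun measurableSet_Ioi (fun r hr => ?_)
  have hr0 : (0:ℝ) < r := ht.trans hr
  have hnorm : ∀ ω : sphere (0:Euc n) 1, ‖r • (ω : Euc n)‖ = r := fun ω => by
    rw [norm_smul, mem_sphere_zero_iff_norm.mp ω.2, mul_one, Real.norm_eq_abs,
      abs_of_pos hr0]
  have hU : ∀ ω : sphere (0:Euc n) 1,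
      Ufun n u (r • (ω : Euc n)) = ∫⁻ a in Ioi r, Ut n u a := fun ω => by
    rw [Ufun, hnorm ω, Ufun_radial hn u hu hr0]
  have hV : ∀ ω : sphere (0:Euc n) 1,
      Vfun n p₂ v₂ (r • (ω : Euc n)) =
        ∫⁻ a in Ioo (0:ℝ) r, Vt n p₂ v₂ a ^ (1 - conjExp p₂) := fun ω => by
    rw [Vfun, hnorm ω, Vfun_radial hn hp₂ v₂ hv₂ r]
  have hinner : (∫⁻ ω, (Ufun n u (r • (ω : Euc n)) ^ (r₂ / q) *
        Vfun n p₂ v₂ (r • (ω : Euc n)) ^ (r₂ / conjExp q) *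
          ENNReal.ofReal (v₂ (r • (ω : Euc n))) ^ (1 - conjExp p₂)) ∂(sphereMeasure n)) =
      (∫⁻ a in Ioi r, Ut n u a) ^ (r₂ / q) *
        (∫⁻ a in Ioo (0:ℝ) r, Vt n p₂ v₂ a ^ (1 - conjExp p₂)) ^ (r₂ / conjExp q) *
          ∫⁻ ω, ENNReal.ofReal (v₂ (r • (ω : Euc n))) ^ (1 - conjExp p₂) ∂(sphereMeasure n) := by
    rw [← lintegral_const_mul]
    · exact lintegral_congr fun ω => by rw [hU ω, hV ω]
    · exact ENNReal.continuous_rpow_const.measurable.comp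
        ((hv₂.comp ((measurable_subtype_coe (α := Euc n)).const_smul r)).ennreal_ofReal)
  rw [hinner, mul_comm, mul_assoc]
  congr 1
  rw [Vt_pow hp₂ v₂ r, mul_comm]

/-- the Euclidean quantity `D₂` coincides with the corresponding
one-dimensional quantity `B₂` built from the spherical weights `Ũ, Ṽ₁, Ṽ₂`. -/
theorem statement15 (n : ℕ) (hn : 1 ≤ n) (p₁ p₂ q r₂ : ℝ)
    (hp₁ : 1 < p₁) (hp₂ : 1 < p₂) (hq : 1 < q) (hqp₂ : q < p₂)
    (hr₂ : 1 / r₂ = 1 / q - 1 / p₂)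
    (u v₁ v₂ : Euc n → ℝ)
    (hu : Measurable u) (hv₁ : Measurable v₁) (hv₂ : Measurable v₂)
    (hupos : ∀ᵐ x ∂(volume : Measure (Euc n)), 0 < u x)
    (hv₁pos : ∀ᵐ x ∂(volume : Measure (Euc n)), 0 < v₁ x)
    (hv₂pos : ∀ᵐ x ∂(volume : Measure (Euc n)), 0 < v₂ x)
    (huloc : LocallyIntegrableOn u {(0 : Euc n)}ᶜ)
    (hv₁loc : LocallyIntegrable (fun x : Euc n => v₁ x ^ (1 - conjExp p₁)))
    (hv₂loc : LocallyIntegrable (fun x : Euc n => v₂ x ^ (1 - conjExp p₂))) :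
    D2 n p₁ p₂ q r₂ u v₁ v₂ =
      ⨆ r ∈ Ioi (0:ℝ),
        (∫⁻ s in Ioo (0:ℝ) r, Vt n p₁ v₁ s ^ (1 - conjExp p₁)) ^ (1 / conjExp p₁) *
          (∫⁻ t in Ioi r,
              (∫⁻ s in Ioi t, Ut n u s) ^ (r₂ / q) *
                (∫⁻ s in Ioo (0:ℝ) t, Vt n p₂ v₂ s ^ (1 - conjExp p₂)) ^ (r₂ / conjExp q) *
                  Vt n p₂ v₂ t ^ (1 - conjExp p₂)) ^ (1 / r₂) := by
  have key : ∀ x : Euc n, x ≠ 0 →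
      Vfun n p₁ v₁ x ^ (1 / conjExp p₁) *
        (∫⁻ y in {y : Euc n | ‖x‖ ≤ ‖y‖},
            Ufun n u y ^ (r₂ / q) * Vfun n p₂ v₂ y ^ (r₂ / conjExp q) *
              ENNReal.ofReal (v₂ y) ^ (1 - conjExp p₂)) ^ (1 / r₂) =
      (∫⁻ s in Ioo (0:ℝ) ‖x‖, Vt n p₁ v₁ s ^ (1 - conjExp p₁)) ^ (1 / conjExp p₁) *
        (∫⁻ t in Ioi ‖x‖,
            (∫⁻ s in Ioi t, Ut n u s) ^ (r₂ / q) *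
              (∫⁻ s in Ioo (0:ℝ) t, Vt n p₂ v₂ s ^ (1 - conjExp p₂)) ^ (r₂ / conjExp q) *
                Vt n p₂ v₂ t ^ (1 - conjExp p₂)) ^ (1 / r₂) := by
    intro x hx
    rw [show Vfun n p₁ v₁ x = _ from Vfun_radial hn hp₁ v₁ hv₁ ‖x‖,
      big_radial hn q r₂ hp₂ u v₂ hu hv₂ (norm_pos_iff.2 hx)]
  rw [D2]
  apply le_antisymm
  · refine iSup₂_le fun x hx => ?_
    rw [key x hx]
    exact le_iSup_of_le ‖x‖ (le_iSup_of_le (mem_Ioi.2 (norm_pos_iff.2 hx)) le_rfl)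
  · refine iSup₂_le fun r hr => ?_
    have hr0 : (0:ℝ) < r := hr
    set x₀ : Euc n := EuclideanSpace.single (⟨0, hn⟩ : Fin n) r with hx₀def
    have hnx : ‖x₀‖ = r := by
      rw [hx₀def, EuclideanSpace.norm_single, Real.norm_eq_abs, abs_of_pos hr0]
    have hx0 : x₀ ≠ 0 := by
      intro h
      rw [h, norm_zero] at hnx
      exact hr0.ne hnx
    rw [← hnx, ← key x₀ hx0]
    exact le_iSup_of_le x₀ (le_iSup_of_le hx0 le_rfl)
end
end

section
/- Let n ≥ 1, let p₁, p₂, q > 1 with q < p₁, define r₁ by 1/r₁ = 1/q − 1/p₁, and let u, v₁, v₂ be measurable functions on ℝⁿ, positive almost everywhere, with u ∈ L¹_loc(ℝⁿ\{0}) and vᵢ^{1−pᵢ'} ∈ L¹_loc(ℝⁿ). Then sup_{x ≠ 0} V₂(x)^{1/p₂'} (∫_{{y : |y| ≥ |x|}} U(y)^{r₁/q} V₁(y)^{r₁/q'} v₁(y)^{1−p₁'} dy)^{1/r₁} = sup_{r > 0} (∫₀^r Ṽ₂(s)^{1−p₂'} ds)^{1/p₂'} (∫_r^∞ (∫_t^∞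 Ũ(s) ds)^{r₁/q} (∫₀^t Ṽ₁(s)^{1−p₁'} ds)^{r₁/q'} Ṽ₁(t)^{1−p₁'} dt)^{1/r₁}, where U(x) = ∫_{{y : |y| ≥ |x|}} u(y) dy, Vᵢ(x) = ∫_{B(0,|x|)} vᵢ(y)^{1−pᵢ'} dy, Ũ(r) = r^{n−1} ∫_{S^{n−1}} u(rω) dσ(ω), and Ṽᵢ(r) = (r^{n−1} ∫_{S^{n−1}} vᵢ(rω)^{1−pᵢ'} dσ(ω))^{1−pᵢ}. -/
open MeasureTheory Set ENNReal Metric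

noncomputable section

/-- `D₃ = sup_{x ≠ 0} V₂(x)^{1/p₂'}
(∫_{|y| ≥ |x|} U(y)^{r₁/q} V₁(y)^{r₁/q'} v₁(y)^{1-p₁'} dy)^{1/r₁}`. -/
def D3 (n : ℕ) (p₁ p₂ q r₁ : ℝ) (u v₁ v₂ : Euc n → ℝ) : ℝ≥0∞ :=
  ⨆ (x : Euc n) (_ : x ≠ 0),
    Vfun n p₂ v₂ x ^ (1 / conjExp p₂) *
      (∫⁻ y in {y : Euc n | ‖x‖ ≤ ‖y‖},
          Ufun n u y ^ (r₁ / q) * Vfun n p₁ v₁ y ^ (r₁ / conjExp q) *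
            ENNReal.ofReal (v₁ y) ^ (1 - conjExp p₁)) ^ (1 / r₁)

lemma aux_lintegral_polar (n : ℕ) (hn : 1 ≤ n) (f : Euc n → ℝ≥0∞) (hf : Measurable f) :
    ∫⁻ x, f x = ∫⁻ r in Ioi (0:ℝ),
      ENNReal.ofReal r ^ ((n : ℝ) - 1) * ∫⁻ ω, f (r • (ω : Euc n)) ∂(sphereMeasure n) := by
  have hdim : Module.finrank ℝ (Euc n) = n := finrank_euclideanSpace_fin
  have hnt : Nontrivial (Euc n) :=
    Module.nontrivial_of_finrank_pos (R := ℝ) (by omega : 0 < Module.finrank ℝ (Euc n))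
  have hF : Measurable (fun p : sphere (0 : Euc n) 1 × Ioi (0:ℝ) =>
      f ((p.2 : ℝ) • (p.1 : Euc n))) :=
    hf.comp (((continuous_subtype_val.comp continuous_snd).smul
      (continuous_subtype_val.comp continuous_fst)).measurable)
  have hps := Measure.measurePreserving_homeomorphUnitSphereProd (volume : Measure (Euc n))
  rw [hdim] at hps
  calc ∫⁻ x, f x ∂(volume : Measure (Euc n))
      = ∫⁻ x in ({0}ᶜ : Set (Euc n)), f x := by
        rw [restrict_compl_singleton]
    _ = ∫⁻ x : ({0}ᶜ : Set (Euc n)), f x ∂((volume : Measure (Euc n)).comap (↑)) := by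
        rw [lintegral_subtype_comap (measurableSet_singleton _).compl]
    _ = ∫⁻ p : sphere (0 : Euc n) 1 × Ioi (0:ℝ),
          f ((p.2 : ℝ) • (p.1 : Euc n))
          ∂((volume : Measure (Euc n)).toSphere.prod (.volumeIoiPow (n - 1))) := by
        rw [← hps.lintegral_comp hF]
        refine lintegral_congr fun x => ?_
        congr 1
        simp only [homeomorphUnitSphereProd_apply_snd_coe,
          homeomorphUnitSphereProd_apply_fst_coe]
        rw [smul_inv_smul₀ (norm_ne_zero_iff.2 x.2)]
    _ = ∫⁻ r : Ioi (0:ℝ), ∫⁻ ω, f ((r : ℝ) • (ω : Euc n)) ∂(volume : Measure (Euc n)).toSphere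
          ∂(Measure.volumeIoiPow (n - 1)) :=
        lintegral_prod_symm _ hF.aemeasurable
    _ = ∫⁻ r : Ioi (0:ℝ), ENNReal.ofReal ((r:ℝ) ^ (n-1)) *
          ∫⁻ ω, f ((r : ℝ) • (ω : Euc n)) ∂(volume : Measure (Euc n)).toSphere
          ∂((volume : Measure ℝ).comap (↑)) := by
        rw [Measure.volumeIoiPow, lintegral_withDensity_eq_lintegral_mul _
          ((measurable_subtype_coe.pow_const _).ennreal_ofReal) hF.lintegral_prod_left']
        rfl
    _ = ∫⁻ r in Ioi (0:ℝ), ENNReal.ofReal (r ^ (n-1)) *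
          ∫⁻ ω, f (r • (ω : Euc n)) ∂(volume : Measure (Euc n)).toSphere :=
        lintegral_subtype_comap measurableSet_Ioi
          (fun r : ℝ => ENNReal.ofReal (r ^ (n-1)) *
            ∫⁻ ω, f (r • (ω : Euc n)) ∂(volume : Measure (Euc n)).toSphere)
    _ = _ := by
        refine setLIntegral_congr_fun measurableSet_Ioi (fun r hr => ?_)
        rw [show sphereMeasure n = (volume : Measure (Euc n)).toSphere from rfl]
        congr 1
        rw [ENNReal.ofReal_pow (le_of_lt hr), ← ENNReal.rpow_natCast]
        congr 1
        push_cast [Nat.cast_sub hn]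
        ring

lemma aux_norm_smul_sphere {n : ℕ} {r : ℝ} (hr : 0 < r) (ω : sphere (0 : Euc n) 1) :
    ‖r • (ω : Euc n)‖ = r := by
  rw [norm_smul, mem_sphere_zero_iff_norm.mp ω.2, mul_one, Real.norm_of_nonneg hr.le]

lemma aux_ball_polar (n : ℕ) (hn : 1 ≤ n) (g : Euc n → ℝ≥0∞) (hg : Measurable g) (ρ : ℝ) :
    ∫⁻ y in ball (0 : Euc n) ρ, g y = ∫⁻ r in Ioo (0:ℝ) ρ,
      ENNReal.ofReal r ^ ((n : ℝ) - 1) * ∫⁻ ω, g (r • (ω : Euc n)) ∂(sphereMeasure n) := by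
  rw [← lintegral_indicator measurableSet_ball,
    aux_lintegral_polar n hn _ (hg.indicator measurableSet_ball)]
  calc ∫⁻ r in Ioi (0:ℝ), ENNReal.ofReal r ^ ((n : ℝ) - 1) *
        ∫⁻ ω, (ball (0:Euc n) ρ).indicator g (r • (ω : Euc n)) ∂(sphereMeasure n)
      = ∫⁻ r in Ioi (0:ℝ), (Iio ρ).indicator (fun r => ENNReal.ofReal r ^ ((n : ℝ) - 1) *
          ∫⁻ ω, g (r • (ω : Euc n)) ∂(sphereMeasure n)) r := by
        refine setLIntegral_congr_fun measurableSet_Ioi (fun r hr => ?_)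
        by_cases hrρ : r < ρ
        · rw [indicator_of_mem (mem_Iio.2 hrρ)]
          congr 1
          refine lintegral_congr fun ω => ?_
          rw [indicator_of_mem]
          rw [mem_ball_zero_iff, aux_norm_smul_sphere hr ω]
          exact hrρ
        · rw [indicator_of_notMem (by simpa using hrρ)]
          have : ∀ ω : sphere (0:Euc n) 1,
              (ball (0:Euc n) ρ).indicator g (r • (ω : Euc n)) = 0 := fun ω => by
            rw [indicator_of_notMem]
            rw [mem_ball_zero_iff, aux_norm_smul_sphere hr ω]
            exact hrρ
          simp [this]
    _ = _ := by
        rw [lintegral_indicator measurableSet_Iio, Measure.restrict_restrict measurableSet_Iio,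
          Iio_inter_Ioi]

lemma aux_ici_polar (n : ℕ) (hn : 1 ≤ n) (g : Euc n → ℝ≥0∞) (hg : Measurable g)
    {ρ : ℝ} (hρ : 0 < ρ) :
    ∫⁻ y in {y : Euc n | ρ ≤ ‖y‖}, g y = ∫⁻ r in Ioi ρ,
      ENNReal.ofReal r ^ ((n : ℝ) - 1) * ∫⁻ ω, g (r • (ω : Euc n)) ∂(sphereMeasure n) := by
  have hS : MeasurableSet {y : Euc n | ρ ≤ ‖y‖} :=
    measurableSet_le measurable_const measurable_norm
  rw [← lintegral_indicator hS, aux_lintegral_polar n hn _ (hg.indicator hS)]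
  calc ∫⁻ r in Ioi (0:ℝ), ENNReal.ofReal r ^ ((n : ℝ) - 1) *
        ∫⁻ ω, ({y : Euc n | ρ ≤ ‖y‖}).indicator g (r • (ω : Euc n)) ∂(sphereMeasure n)
      = ∫⁻ r in Ioi (0:ℝ), (Ici ρ).indicator (fun r => ENNReal.ofReal r ^ ((n : ℝ) - 1) *
          ∫⁻ ω, g (r • (ω : Euc n)) ∂(sphereMeasure n)) r := by
        refine setLIntegral_congr_fun measurableSet_Ioi (fun r hr => ?_)
        by_cases hrρ : ρ ≤ r
        · rw [indicator_of_mem (mem_Ici.2 hrρ)]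
          congr 1
          refine lintegral_congr fun ω => ?_
          rw [indicator_of_mem]
          show ρ ≤ ‖r • (ω : Euc n)‖
          rw [aux_norm_smul_sphere hr ω]
          exact hrρ
        · rw [indicator_of_notMem (by simpa using hrρ)]
          have : ∀ ω : sphere (0:Euc n) 1,
              ({y : Euc n | ρ ≤ ‖y‖}).indicator g (r • (ω : Euc n)) = 0 := fun ω => by
            rw [indicator_of_notMem]
            show ¬ ρ ≤ ‖r • (ω : Euc n)‖
            rw [aux_norm_smul_sphere hr ω]
            exact hrρ
          simp [this]
    _ = _ := by
        have h1 : Ici ρ ∩ Ioi (0:ℝ) = Ici ρ := by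
          rw [inter_eq_left]
          exact fun t ht => lt_of_lt_of_le hρ ht
        rw [lintegral_indicator measurableSet_Ici, Measure.restrict_restrict measurableSet_Ici,
          h1, Measure.restrict_congr_set Ioi_ae_eq_Ici.symm]

lemma aux_conj_mul {p : ℝ} (hp : 1 < p) : (1 - p) * (1 - conjExp p) = 1 := by
  have h : p - 1 ≠ 0 := sub_ne_zero.2 (ne_of_gt hp)
  rw [conjExp]
  field_simp
  ring

lemma aux_Vt_pow (n : ℕ) {p : ℝ} (hp : 1 < p) (v : Euc n → ℝ) (s : ℝ) :
    Vt n p v s ^ (1 - conjExp p) =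
      ENNReal.ofReal s ^ ((n : ℝ) - 1) *
        ∫⁻ ω, ENNReal.ofReal (v (s • (ω : Euc n))) ^ (1 - conjExp p) ∂(sphereMeasure n) := by
  rw [Vt, ← ENNReal.rpow_mul, aux_conj_mul hp, ENNReal.rpow_one]

lemma aux_Vfun_eq (n : ℕ) (hn : 1 ≤ n) {p : ℝ} (hp : 1 < p) {v : Euc n → ℝ}
    (hv : Measurable v) (x : Euc n) :
    Vfun n p v x = ∫⁻ s in Ioo (0:ℝ) ‖x‖, Vt n p v s ^ (1 - conjExp p) := by
  have hg : Measurable (fun y : Euc n => ENNReal.ofReal (v y) ^ (1 - conjExp p)) :=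
    ENNReal.continuous_rpow_const.measurable.comp hv.ennreal_ofReal
  rw [Vfun, aux_ball_polar n hn _ hg]
  exact (setLIntegral_congr_fun measurableSet_Ioo
    (fun s _ => aux_Vt_pow n hp v s)).symm

lemma aux_Ufun_eq (n : ℕ) (hn : 1 ≤ n) {u : Euc n → ℝ} (hu : Measurable u)
    {x : Euc n} (hx : 0 < ‖x‖) :
    Ufun n u x = ∫⁻ s in Ioi ‖x‖, Ut n u s :=
  aux_ici_polar n hn _ hu.ennreal_ofReal hx

lemma aux_measurable_Ufun (n : ℕ) {u : Euc n → ℝ} (hu : Measurable u) :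
    Measurable (Ufun n u) := by
  have hS : MeasurableSet {p : Euc n × Euc n | ‖p.1‖ ≤ ‖p.2‖} :=
    measurableSet_le (measurable_norm.comp measurable_fst) (measurable_norm.comp measurable_snd)
  have : Ufun n u = fun x => ∫⁻ y,
      ({p : Euc n × Euc n | ‖p.1‖ ≤ ‖p.2‖}.indicator
        (fun p => ENNReal.ofReal (u p.2))) (x, y) := by
    funext x
    rw [Ufun, ← lintegral_indicator (measurableSet_le measurable_const measurable_norm)]
    refine lintegral_congr fun y => ?_
    simp only [indicator_apply, mem_setOf_eq]
  rw [this]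
  exact Measurable.lintegral_prod_right
    ((hu.comp measurable_snd).ennreal_ofReal.indicator hS)

lemma aux_measurable_Vfun (n : ℕ) (p : ℝ) {v : Euc n → ℝ} (hv : Measurable v) :
    Measurable (Vfun n p v) := by
  have hS : MeasurableSet {q : Euc n × Euc n | ‖q.2‖ < ‖q.1‖} :=
    measurableSet_lt (measurable_norm.comp measurable_snd) (measurable_norm.comp measurable_fst)
  have : Vfun n p v = fun x => ∫⁻ y,
      ({q : Euc n × Euc n | ‖q.2‖ < ‖q.1‖}.indicator
        (fun q => ENNReal.ofReal (v q.2) ^ (1 - conjExp p))) (x, y) := by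
    funext x
    rw [Vfun, ← lintegral_indicator measurableSet_ball]
    refine lintegral_congr fun y => ?_
    by_cases h : ‖y‖ < ‖x‖ <;>
      simp [indicator_apply, mem_ball_zero_iff, mem_setOf_eq, h]
  rw [this]
  exact Measurable.lintegral_prod_right
    ((ENNReal.continuous_rpow_const.measurable.comp
      (hv.comp measurable_snd).ennreal_ofReal).indicator hS)

lemma aux_meas_rpow {α : Type*} [MeasurableSpace α] {f : α → ℝ≥0∞} (hf : Measurable f)
    (c : ℝ) : Measurable fun x => f x ^ c :=
  ENNReal.continuous_rpow_const.measurable.comp hf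

lemma aux_big (n : ℕ) (hn : 1 ≤ n) {p₁ q r₁ : ℝ} (hp₁ : 1 < p₁)
    {u v₁ : Euc n → ℝ} (hu : Measurable u) (hv₁ : Measurable v₁)
    {ρ : ℝ} (hρ : 0 < ρ) :
    ∫⁻ y in {y : Euc n | ρ ≤ ‖y‖},
        Ufun n u y ^ (r₁ / q) * Vfun n p₁ v₁ y ^ (r₁ / conjExp q) *
          ENNReal.ofReal (v₁ y) ^ (1 - conjExp p₁) =
      ∫⁻ t in Ioi ρ,
        (∫⁻ s in Ioi t, Ut n u s) ^ (r₁ / q) *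
          (∫⁻ s in Ioo (0:ℝ) t, Vt n p₁ v₁ s ^ (1 - conjExp p₁)) ^ (r₁ / conjExp q) *
            Vt n p₁ v₁ t ^ (1 - conjExp p₁) := by
  have hG : Measurable (fun y : Euc n =>
      Ufun n u y ^ (r₁ / q) * Vfun n p₁ v₁ y ^ (r₁ / conjExp q) *
        ENNReal.ofReal (v₁ y) ^ (1 - conjExp p₁)) :=
    ((aux_meas_rpow (aux_measurable_Ufun n hu) _).mul
      (aux_meas_rpow (aux_measurable_Vfun n p₁ hv₁) _)).mul
      (aux_meas_rpow hv₁.ennreal_ofReal _)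
  rw [aux_ici_polar n hn _ hG hρ]
  refine setLIntegral_congr_fun measurableSet_Ioi (fun t ht => ?_)
  have ht0 : 0 < t := hρ.trans ht
  have hA : ∀ ω : sphere (0 : Euc n) 1,
      Ufun n u (t • (ω : Euc n)) = ∫⁻ s in Ioi t, Ut n u s := fun ω => by
    have h := aux_Ufun_eq n hn hu (x := t • (ω : Euc n))
      (by rw [aux_norm_smul_sphere ht0]; exact ht0)
    rwa [aux_norm_smul_sphere ht0] at h
  have hB : ∀ ω : sphere (0 : Euc n) 1,
      Vfun n p₁ v₁ (t • (ω : Euc n)) =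
        ∫⁻ s in Ioo (0:ℝ) t, Vt n p₁ v₁ s ^ (1 - conjExp p₁) := fun ω => by
    have h := aux_Vfun_eq n hn hp₁ hv₁ (t • (ω : Euc n))
    rwa [aux_norm_smul_sphere ht0] at h
  have hstep : ∫⁻ ω, Ufun n u (t • (ω : Euc n)) ^ (r₁ / q) *
        Vfun n p₁ v₁ (t • (ω : Euc n)) ^ (r₁ / conjExp q) *
          ENNReal.ofReal (v₁ (t • (ω : Euc n))) ^ (1 - conjExp p₁) ∂(sphereMeasure n) =
      ((∫⁻ s in Ioi t, Ut n u s) ^ (r₁ / q) *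
        (∫⁻ s in Ioo (0:ℝ) t, Vt n p₁ v₁ s ^ (1 - conjExp p₁)) ^ (r₁ / conjExp q)) *
        ∫⁻ ω, ENNReal.ofReal (v₁ (t • (ω : Euc n))) ^ (1 - conjExp p₁) ∂(sphereMeasure n) := by
    have hm : Measurable (fun ω : sphere (0 : Euc n) 1 =>
        ENNReal.ofReal (v₁ (t • (ω : Euc n))) ^ (1 - conjExp p₁)) :=
      aux_meas_rpow ((hv₁.comp
        ((continuous_subtype_val.const_smul t).measurable)).ennreal_ofReal) _
    rw [← lintegral_const_mul _ hm]
    refine lintegral_congr fun ω => ?_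
    rw [hA ω, hB ω]
  rw [hstep, aux_Vt_pow n hp₁ v₁ t]
  ring

/-- the Euclidean quantity `D₃` coincides with the corresponding
one-dimensional quantity `B₃` built from the spherical weights `Ũ, Ṽ₁, Ṽ₂`. -/
theorem statement16 (n : ℕ) (hn : 1 ≤ n) (p₁ p₂ q r₁ : ℝ)
    (hp₁ : 1 < p₁) (hp₂ : 1 < p₂) (hq : 1 < q) (hqp₁ : q < p₁)
    (hr₁ : 1 / r₁ = 1 / q - 1 / p₁)
    (u v₁ v₂ : Euc n → ℝ)
    (hu : Measurable u) (hv₁ : Measurable v₁) (hv₂ : Measurable v₂)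
    (hupos : ∀ᵐ x ∂(volume : Measure (Euc n)), 0 < u x)
    (hv₁pos : ∀ᵐ x ∂(volume : Measure (Euc n)), 0 < v₁ x)
    (hv₂pos : ∀ᵐ x ∂(volume : Measure (Euc n)), 0 < v₂ x)
    (huloc : LocallyIntegrableOn u {(0 : Euc n)}ᶜ)
    (hv₁loc : LocallyIntegrable (fun x : Euc n => v₁ x ^ (1 - conjExp p₁)))
    (hv₂loc : LocallyIntegrable (fun x : Euc n => v₂ x ^ (1 - conjExp p₂))) :
    D3 n p₁ p₂ q r₁ u v₁ v₂ =
      ⨆ r ∈ Ioi (0:ℝ),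
        (∫⁻ s in Ioo (0:ℝ) r, Vt n p₂ v₂ s ^ (1 - conjExp p₂)) ^ (1 / conjExp p₂) *
          (∫⁻ t in Ioi r,
              (∫⁻ s in Ioi t, Ut n u s) ^ (r₁ / q) *
                (∫⁻ s in Ioo (0:ℝ) t, Vt n p₁ v₁ s ^ (1 - conjExp p₁)) ^ (r₁ / conjExp q) *
                  Vt n p₁ v₁ t ^ (1 - conjExp p₁)) ^ (1 / r₁) := by
  have hnt : Nontrivial (Euc n) :=
    Module.nontrivial_of_finrank_pos (R := ℝ)
      (by rw [finrank_euclideanSpace_fin]; omega : 0 < Module.finrank ℝ (Euc n))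
  have key : ∀ x : Euc n, x ≠ 0 →
      Vfun n p₂ v₂ x ^ (1 / conjExp p₂) *
        (∫⁻ y in {y : Euc n | ‖x‖ ≤ ‖y‖},
            Ufun n u y ^ (r₁ / q) * Vfun n p₁ v₁ y ^ (r₁ / conjExp q) *
              ENNReal.ofReal (v₁ y) ^ (1 - conjExp p₁)) ^ (1 / r₁) =
      (∫⁻ s in Ioo (0:ℝ) ‖x‖, Vt n p₂ v₂ s ^ (1 - conjExp p₂)) ^ (1 / conjExp p₂) *
        (∫⁻ t in Ioi ‖x‖,
            (∫⁻ s in Ioi t, Ut n u s) ^ (r₁ / q) *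
              (∫⁻ s in Ioo (0:ℝ) t, Vt n p₁ v₁ s ^ (1 - conjExp p₁)) ^ (r₁ / conjExp q) *
                Vt n p₁ v₁ t ^ (1 - conjExp p₁)) ^ (1 / r₁) := by
    intro x hx
    rw [aux_Vfun_eq n hn hp₂ hv₂ x, aux_big n hn hp₁ hu hv₁ (norm_pos_iff.2 hx)]
  rw [D3]
  apply le_antisymm
  · refine iSup₂_le fun x hx => ?_
    rw [key x hx]
    exact le_iSup_of_le ‖x‖ (le_iSup_of_le (mem_Ioi.2 (norm_pos_iff.2 hx)) le_rfl)
  · refine iSup₂_le fun r hr => ?_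
    obtain ⟨x, hxr⟩ := exists_norm_eq (Euc n) (le_of_lt hr)
    have hx : x ≠ 0 := by rw [← norm_pos_iff, hxr]; exact hr
    rw [← hxr, ← key x hx]
    exact le_iSup_of_le x (le_iSup_of_le hx le_rfl)
end
end

section
/- Let n ≥ 1, let p₁, p₂, q > 1 with q ≥ p₁ and q < p₂, define r₂ by 1/r₂ = 1/q − 1/p₂, and let α, β₁, β₂ ∈ ℝ. Then the quantity sup_{r > 0} (∫₀^r ρ^{β₁(1−p₁')+n−1} dρ)^{1/p₁'} · (∫_r^∞ (∫_ρ^∞ s^{α+n−1} ds)^{r₂/q} (∫₀^ρ s^{β₂(1−p₂')+n−1} ds)^{r₂/q'} ρ^{β₂(1−p₂')+n−1} dρ)^{1/r₂} is finite if and only if β₁(1−p₁') + n > 0, α + n < 0, β₂(1−p₂') + n > 0, (α+n)r₂/q + (β₂(1−p₂')+n)r₂/q' + β₂(1−p₂') + n < 0, and (α+n)/q + (β₂(1−p₂')+n)/q' + (β₂(1−p₂')+n)/r₂ + (β₁(1−p₁')+n)/p₁' = 0. -/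
open MeasureTheory Set ENNReal

noncomputable section

lemma lint_Ioo_top {r e : ℝ} (hr : 0 < r) (he : e ≤ -1) :
    ∫⁻ ρ in Ioo (0:ℝ) r, ENNReal.ofReal ρ ^ e = ⊤ := by
  rw [setLIntegral_congr_fun measurableSet_Ioo
      (fun ρ hρ => ENNReal.ofReal_rpow_of_pos hρ.1)]
  by_contra h
  have hmeas : AEStronglyMeasurable (fun x : ℝ => x ^ e) (volume.restrict (Ioo (0:ℝ) r)) :=
    (ContinuousOn.rpow_const continuousOn_id fun x hx => Or.inl (ne_of_gt hx.1)).aestronglyMeasurable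
      measurableSet_Ioo
  have hnn : 0 ≤ᵐ[volume.restrict (Ioo (0:ℝ) r)] fun x : ℝ => x ^ e := by
    filter_upwards [ae_restrict_mem measurableSet_Ioo] with x hx
    exact Real.rpow_nonneg hx.1.le e
  have hint : IntegrableOn (fun x : ℝ => x ^ e) (Ioo (0:ℝ) r) :=
    (lintegral_ofReal_ne_top_iff_integrable hmeas hnn).1 h
  have := (intervalIntegral.integrableOn_Ioo_rpow_iff hr).1 hint
  linarith

lemma lint_Ioi_top {r e : ℝ} (hr : 0 < r) (he : -1 ≤ e) :
    ∫⁻ ρ in Ioi r, ENNReal.ofReal ρ ^ e = ⊤ := by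
  rw [setLIntegral_congr_fun measurableSet_Ioi
      (fun ρ hρ => ENNReal.ofReal_rpow_of_pos (hr.trans hρ))]
  by_contra h
  have hmeas : AEStronglyMeasurable (fun x : ℝ => x ^ e) (volume.restrict (Ioi r)) :=
    (ContinuousOn.rpow_const continuousOn_id fun x hx =>
      Or.inl (ne_of_gt (hr.trans hx))).aestronglyMeasurable measurableSet_Ioi
  have hnn : 0 ≤ᵐ[volume.restrict (Ioi r)] fun x : ℝ => x ^ e := by
    filter_upwards [ae_restrict_mem measurableSet_Ioi] with x hx
    exact Real.rpow_nonneg (hr.trans hx).le e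
  have hint : IntegrableOn (fun x : ℝ => x ^ e) (Ioi r) :=
    (lintegral_ofReal_ne_top_iff_integrable hmeas hnn).1 h
  have := (integrableOn_Ioi_rpow_iff hr).1 hint
  linarith

lemma lint_Ioo_val {r e : ℝ} (hr : 0 < r) (he : -1 < e) :
    ∫⁻ ρ in Ioo (0:ℝ) r, ENNReal.ofReal ρ ^ e = ENNReal.ofReal (r ^ (e+1) / (e+1)) := by
  rw [setLIntegral_congr_fun measurableSet_Ioo
      (fun ρ hρ => ENNReal.ofReal_rpow_of_pos hρ.1)]
  have hint : IntegrableOn (fun x : ℝ => x ^ e) (Ioo (0:ℝ) r) :=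
    (intervalIntegral.integrableOn_Ioo_rpow_iff hr).2 he
  have hnn : 0 ≤ᵐ[volume.restrict (Ioo (0:ℝ) r)] fun x : ℝ => x ^ e := by
    filter_upwards [ae_restrict_mem measurableSet_Ioo] with x hx
    exact Real.rpow_nonneg hx.1.le e
  rw [← ofReal_integral_eq_lintegral_ofReal hint hnn]
  congr 1
  have h1 : ∫ x in Ioo (0:ℝ) r, x ^ e = ∫ x in (0:ℝ)..r, x ^ e := by
    rw [intervalIntegral.integral_of_le hr.le, ← integral_Ioc_eq_integral_Ioo]
  rw [h1, integral_rpow (Or.inl he), Real.zero_rpow (by linarith : e + 1 ≠ 0)]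
  ring

lemma lint_Ioi_val {r e : ℝ} (hr : 0 < r) (he : e < -1) :
    ∫⁻ ρ in Ioi r, ENNReal.ofReal ρ ^ e = ENNReal.ofReal (r ^ (e+1) / (-(e+1))) := by
  rw [setLIntegral_congr_fun measurableSet_Ioi
      (fun ρ hρ => ENNReal.ofReal_rpow_of_pos (hr.trans hρ))]
  have hint : IntegrableOn (fun x : ℝ => x ^ e) (Ioi r) :=
    (integrableOn_Ioi_rpow_iff hr).2 he
  have hnn : 0 ≤ᵐ[volume.restrict (Ioi r)] fun x : ℝ => x ^ e := by
    filter_upwards [ae_restrict_mem measurableSet_Ioi] with x hx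
    exact Real.rpow_nonneg (hr.trans hx).le e
  rw [← ofReal_integral_eq_lintegral_ofReal hint hnn]
  congr 1
  rw [integral_Ioi_rpow_of_lt he hr, neg_div, div_neg]

lemma lint_Ioo_pos {r : ℝ} (hr : 0 < r) (e : ℝ) :
    0 < ∫⁻ ρ in Ioo (0:ℝ) r, ENNReal.ofReal ρ ^ e := by
  rcases le_or_gt e (-1) with he | he
  · rw [lint_Ioo_top hr he]; exact (by simp : (0:ℝ≥0∞) < ⊤)
  · rw [lint_Ioo_val hr he]
    exact ENNReal.ofReal_pos.2 (div_pos (Real.rpow_pos_of_pos hr _) (by linarith))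

lemma lint_Ioi_pos {r : ℝ} (hr : 0 < r) (e : ℝ) :
    0 < ∫⁻ ρ in Ioi r, ENNReal.ofReal ρ ^ e := by
  rcases lt_or_ge e (-1) with he | he
  · rw [lint_Ioi_val hr he]
    exact ENNReal.ofReal_pos.2 (div_pos (Real.rpow_pos_of_pos hr _) (by linarith))
  · rw [lint_Ioi_top hr he]; exact (by simp : (0:ℝ≥0∞) < ⊤)

/-- The inner integrand. -/
def gq (b c e₁ e₂ ρ : ℝ) : ℝ≥0∞ :=
  (∫⁻ s in Ioi ρ, ENNReal.ofReal s ^ (b - 1)) ^ e₁ *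
    (∫⁻ s in Ioo (0:ℝ) ρ, ENNReal.ofReal s ^ (c - 1)) ^ e₂ *
      ENNReal.ofReal ρ ^ (c - 1)

def Fq (a b c e₁ e₂ u v r : ℝ) : ℝ≥0∞ :=
  (∫⁻ ρ in Ioo (0:ℝ) r, ENNReal.ofReal ρ ^ (a - 1)) ^ u *
    (∫⁻ ρ in Ioi r, gq b c e₁ e₂ ρ) ^ v

lemma gq_pos {b c e₁ e₂ ρ : ℝ} (he₁ : 0 < e₁) (he₂ : 0 < e₂) (hρ : 0 < ρ) :
    0 < gq b c e₁ e₂ ρ := by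
  refine ENNReal.mul_pos (ENNReal.mul_pos ?_ ?_).ne' ?_
  · exact (ENNReal.rpow_pos_of_nonneg (lint_Ioi_pos hρ _) he₁.le).ne'
  · exact (ENNReal.rpow_pos_of_nonneg (lint_Ioo_pos hρ _) he₂.le).ne'
  · exact (ENNReal.rpow_pos (ENNReal.ofReal_pos.2 hρ) ENNReal.ofReal_ne_top).ne'

lemma gq_meas (b c e₁ e₂ : ℝ) : Measurable (gq b c e₁ e₂) := by
  have m1 : Measurable fun ρ : ℝ => ∫⁻ s in Ioi ρ, ENNReal.ofReal s ^ (b - 1) := by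
    apply Antitone.measurable
    intro x y hxy
    exact lintegral_mono' (Measure.restrict_mono (Ioi_subset_Ioi hxy) le_rfl) le_rfl
  have m2 : Measurable fun ρ : ℝ => ∫⁻ s in Ioo (0:ℝ) ρ, ENNReal.ofReal s ^ (c - 1) := by
    apply Monotone.measurable
    intro x y hxy
    exact lintegral_mono' (Measure.restrict_mono (Ioo_subset_Ioo le_rfl hxy) le_rfl) le_rfl
  exact ((ENNReal.continuous_rpow_const.measurable.comp m1).mul
      (ENNReal.continuous_rpow_const.measurable.comp m2)).mul
    (ENNReal.continuous_rpow_const.measurable.comp ENNReal.measurable_ofReal)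

lemma gq_int_pos {b c e₁ e₂ r : ℝ} (he₁ : 0 < e₁) (he₂ : 0 < e₂) (hr : 0 < r) :
    0 < ∫⁻ ρ in Ioi r, gq b c e₁ e₂ ρ := by
  rw [lintegral_pos_iff_support (gq_meas b c e₁ e₂)]
  have hsub : Ioi r ⊆ Function.support (gq b c e₁ e₂) := fun ρ hρ =>
    (gq_pos he₁ he₂ (hr.trans hρ)).ne'
  calc (0:ℝ≥0∞) < ⊤ := by simp
    _ = volume.restrict (Ioi r) (Ioi r) := by
        rw [Measure.restrict_apply_self, Real.volume_Ioi]
    _ ≤ volume.restrict (Ioi r) (Function.support (gq b c e₁ e₂)) :=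
        measure_mono hsub

lemma gq_eq {b c e₁ e₂ : ℝ} (he₁ : 0 < e₁) (he₂ : 0 < e₂) (hb : b < 0) (hc : 0 < c)
    {ρ : ℝ} (hρ : 0 < ρ) :
    gq b c e₁ e₂ ρ =
      ENNReal.ofReal ((((-b) ^ e₁)⁻¹ * ((c : ℝ) ^ e₂)⁻¹) * ρ ^ (b * e₁ + c * e₂ + c - 1)) := by
  have h1 : ∫⁻ s in Ioi ρ, ENNReal.ofReal s ^ (b - 1)
      = ENNReal.ofReal (ρ ^ b / (-b)) := by
    rw [lint_Ioi_val hρ (by linarith : b - 1 < -1)]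
    norm_num
  have h2 : ∫⁻ s in Ioo (0:ℝ) ρ, ENNReal.ofReal s ^ (c - 1)
      = ENNReal.ofReal (ρ ^ c / c) := by
    rw [lint_Ioo_val hρ (by linarith : -1 < c - 1)]
    norm_num
  rw [gq, h1, h2,
    ENNReal.ofReal_rpow_of_pos (div_pos (Real.rpow_pos_of_pos hρ _) (by linarith)),
    ENNReal.ofReal_rpow_of_pos (div_pos (Real.rpow_pos_of_pos hρ _) hc),
    ENNReal.ofReal_rpow_of_pos hρ,
    ← ENNReal.ofReal_mul (Real.rpow_nonneg (div_nonneg (Real.rpow_nonneg hρ.le _) (by linarith)) _),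
    ← ENNReal.ofReal_mul (mul_nonneg (Real.rpow_nonneg (div_nonneg (Real.rpow_nonneg hρ.le _) (by linarith)) _) (Real.rpow_nonneg (div_nonneg (Real.rpow_nonneg hρ.le _) hc.le) _))]
  congr 1
  rw [Real.div_rpow (Real.rpow_nonneg hρ.le _) (by linarith : (0:ℝ) ≤ -b),
    Real.div_rpow (Real.rpow_nonneg hρ.le _) hc.le,
    ← Real.rpow_mul hρ.le, ← Real.rpow_mul hρ.le]
  rw [show b * e₁ + c * e₂ + c - 1 = b * e₁ + (c * e₂ + (c - 1)) by ring,
    Real.rpow_add hρ, Real.rpow_add hρ]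
  field_simp

lemma gq_int_eq {b c e₁ e₂ : ℝ} (he₁ : 0 < e₁) (he₂ : 0 < e₂) (hb : b < 0) (hc : 0 < c)
    {r : ℝ} (hr : 0 < r) :
    ∫⁻ ρ in Ioi r, gq b c e₁ e₂ ρ =
      ENNReal.ofReal (((-b) ^ e₁)⁻¹ * ((c : ℝ) ^ e₂)⁻¹) *
        ∫⁻ ρ in Ioi r, ENNReal.ofReal ρ ^ (b * e₁ + c * e₂ + c - 1) := by
  rw [← lintegral_const_mul' _ _ ENNReal.ofReal_ne_top]
  refine setLIntegral_congr_fun measurableSet_Ioi (fun ρ hρ => ?_)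
  have hρ0 : 0 < ρ := hr.trans hρ
  rw [gq_eq he₁ he₂ hb hc hρ0, ENNReal.ofReal_mul (mul_nonneg (inv_nonneg.2 (Real.rpow_nonneg (by linarith) _)) (inv_nonneg.2 (Real.rpow_nonneg hc.le _))),
    ENNReal.ofReal_rpow_of_pos hρ0]

def Cq (a b c e₁ e₂ u v : ℝ) : ℝ :=
  ((a : ℝ) ^ u)⁻¹ * ((((-b) ^ e₁)⁻¹ * ((c : ℝ) ^ e₂)⁻¹ / (-(b * e₁ + c * e₂ + c))) ^ v)

lemma Cq_pos {a b c e₁ e₂ u v : ℝ} (ha : 0 < a) (hb : b < 0) (hc : 0 < c)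
    (hd : b * e₁ + c * e₂ + c < 0) : 0 < Cq a b c e₁ e₂ u v := by
  have h3 := Real.rpow_pos_of_pos ha u
  have h4 := Real.rpow_pos_of_pos (neg_pos.2 hb) e₁
  have h5 := Real.rpow_pos_of_pos hc e₂
  have h6 : (0:ℝ) < ((-b) ^ e₁)⁻¹ * ((c : ℝ) ^ e₂)⁻¹ / (-(b * e₁ + c * e₂ + c)) := by
    apply div_pos (by positivity) (by linarith)
  have h7 := Real.rpow_pos_of_pos h6 v
  rw [Cq]; positivity

lemma Fq_eq {a b c e₁ e₂ u v : ℝ} (he₁ : 0 < e₁) (he₂ : 0 < e₂) (hu : 0 < u) (hv : 0 < v)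
    (ha : 0 < a) (hb : b < 0) (hc : 0 < c) (hd : b * e₁ + c * e₂ + c < 0)
    {r : ℝ} (hr : 0 < r) :
    Fq a b c e₁ e₂ u v r =
      ENNReal.ofReal (Cq a b c e₁ e₂ u v * r ^ (a * u + (b * e₁ + c * e₂ + c) * v)) := by
  have hK : (0:ℝ) < ((-b) ^ e₁)⁻¹ * ((c : ℝ) ^ e₂)⁻¹ := by
    have h3 := Real.rpow_pos_of_pos (neg_pos.2 hb) e₁
    have h4 := Real.rpow_pos_of_pos hc e₂
    positivity
  have h1 : ∫⁻ ρ in Ioo (0:ℝ) r, ENNReal.ofReal ρ ^ (a - 1) = ENNReal.ofReal (r ^ a / a) := by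
    rw [lint_Ioo_val hr (by linarith : -1 < a - 1),
      show a - 1 + 1 = a by ring]
  have h2 : ∫⁻ ρ in Ioi r, gq b c e₁ e₂ ρ
      = ENNReal.ofReal ((((-b) ^ e₁)⁻¹ * ((c : ℝ) ^ e₂)⁻¹) *
          (r ^ (b * e₁ + c * e₂ + c) / (-(b * e₁ + c * e₂ + c)))) := by
    rw [gq_int_eq he₁ he₂ hb hc hr, lint_Ioi_val hr (by linarith),
      show b * e₁ + c * e₂ + c - 1 + 1 = b * e₁ + c * e₂ + c by ring,
      ← ENNReal.ofReal_mul hK.le]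
  rw [Fq, h1, h2,
    ENNReal.ofReal_rpow_of_pos (div_pos (Real.rpow_pos_of_pos hr _) ha),
    ENNReal.ofReal_rpow_of_pos
      (mul_pos hK (div_pos (Real.rpow_pos_of_pos hr _) (by linarith))),
    ← ENNReal.ofReal_mul (Real.rpow_nonneg (div_nonneg (Real.rpow_nonneg hr.le _) ha.le) _)]
  congr 1
  have hdineq : (0:ℝ) < -(b * e₁ + c * e₂ + c) := by linarith
  rw [Real.div_rpow (Real.rpow_nonneg hr.le _) ha.le, ← Real.rpow_mul hr.le,
    show (((-b) ^ e₁)⁻¹ * ((c : ℝ) ^ e₂)⁻¹) *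
        (r ^ (b * e₁ + c * e₂ + c) / (-(b * e₁ + c * e₂ + c)))
      = (((-b) ^ e₁)⁻¹ * ((c : ℝ) ^ e₂)⁻¹ / (-(b * e₁ + c * e₂ + c))) *
          r ^ (b * e₁ + c * e₂ + c) by ring,
    Real.mul_rpow (le_of_lt (div_pos hK hdineq)) (Real.rpow_nonneg hr.le _),
    ← Real.rpow_mul hr.le, Real.rpow_add hr, Cq]
  ring

lemma statement18_core (a b c e₁ e₂ u v : ℝ) (he₁ : 0 < e₁) (he₂ : 0 < e₂)
    (hu : 0 < u) (hv : 0 < v) :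
    (⨆ r ∈ Ioi (0:ℝ), Fq a b c e₁ e₂ u v r) < ⊤ ↔
      0 < a ∧ b < 0 ∧ 0 < c ∧ b * e₁ + c * e₂ + c < 0 ∧
        a * u + (b * e₁ + c * e₂ + c) * v = 0 := by
  constructor
  · intro h
    have h1 : Fq a b c e₁ e₂ u v 1 < ⊤ :=
      lt_of_le_of_lt (le_biSup _ (mem_Ioi.2 one_pos)) h
    rw [Fq] at h1
    have hA : 0 < a := by
      by_contra hA
      push_neg at hA
      rw [lint_Ioo_top one_pos (by linarith), ENNReal.top_rpow_of_pos hu,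
        ENNReal.top_mul
          (ENNReal.rpow_pos_of_nonneg (gq_int_pos he₁ he₂ one_pos) hv.le).ne'] at h1
      exact absurd h1 (lt_irrefl ⊤)
    have hf1pos : 0 < (∫⁻ ρ in Ioo (0:ℝ) 1, ENNReal.ofReal ρ ^ (a - 1)) ^ u :=
      ENNReal.rpow_pos_of_nonneg (lint_Ioo_pos one_pos _) hu.le
    have h2 : (∫⁻ ρ in Ioi (1:ℝ), gq b c e₁ e₂ ρ) ≠ ⊤ := by
      intro h2
      rw [h2, ENNReal.top_rpow_of_pos hv, ENNReal.mul_top hf1pos.ne'] at h1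
      exact absurd h1 (lt_irrefl ⊤)
    have hB : b < 0 := by
      by_contra hB
      push_neg at hB
      apply h2
      have hgtop : ∀ ρ ∈ Ioi (1:ℝ), gq b c e₁ e₂ ρ = (⊤ : ℝ≥0∞) := by
        intro ρ hρ
        have hρ0 : (0:ℝ) < ρ := one_pos.trans hρ
        rw [gq, lint_Ioi_top hρ0 (by linarith), ENNReal.top_rpow_of_pos he₁,
          ENNReal.top_mul
            (ENNReal.rpow_pos_of_nonneg (lint_Ioo_pos hρ0 _) he₂.le).ne',
          ENNReal.top_mul
            (ENNReal.rpow_pos (ENNReal.ofReal_pos.2 hρ0) ENNReal.ofReal_ne_top).ne']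
      rw [setLIntegral_congr_fun measurableSet_Ioi hgtop, setLIntegral_const,
        Real.volume_Ioi, ENNReal.top_mul (by simp)]
    have hC : 0 < c := by
      by_contra hC
      push_neg at hC
      apply h2
      have hgtop : ∀ ρ ∈ Ioi (1:ℝ), gq b c e₁ e₂ ρ = (⊤ : ℝ≥0∞) := by
        intro ρ hρ
        have hρ0 : (0:ℝ) < ρ := one_pos.trans hρ
        rw [gq, lint_Ioo_top hρ0 (by linarith), ENNReal.top_rpow_of_pos he₂,
          ENNReal.mul_top
            (ENNReal.rpow_pos_of_nonneg (lint_Ioi_pos hρ0 _) he₁.le).ne',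
          ENNReal.top_mul
            (ENNReal.rpow_pos (ENNReal.ofReal_pos.2 hρ0) ENNReal.ofReal_ne_top).ne']
      rw [setLIntegral_congr_fun measurableSet_Ioi hgtop, setLIntegral_const,
        Real.volume_Ioi, ENNReal.top_mul (by simp)]
    have hK : (0:ℝ) < ((-b) ^ e₁)⁻¹ * ((c : ℝ) ^ e₂)⁻¹ := by
      have h3 := Real.rpow_pos_of_pos (neg_pos.2 hB) e₁
      have h4 := Real.rpow_pos_of_pos hC e₂
      positivity
    have hD : b * e₁ + c * e₂ + c < 0 := by
      by_contra hD
      push_neg at hD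
      apply h2
      rw [gq_int_eq he₁ he₂ hB hC one_pos, lint_Ioi_top one_pos (by linarith),
        ENNReal.mul_top (ENNReal.ofReal_pos.2 hK).ne']
    refine ⟨hA, hB, hC, hD, ?_⟩
    by_contra hT
    have hC₀ : 0 < Cq a b c e₁ e₂ u v := Cq_pos hA hB hC hD
    have key : ∀ x : ℝ, 0 < x →
        ENNReal.ofReal (Cq a b c e₁ e₂ u v * x) ≤ ⨆ r ∈ Ioi (0:ℝ), Fq a b c e₁ e₂ u v r := by
      intro x hx
      have hrpos : (0:ℝ) < x ^ (a * u + (b * e₁ + c * e₂ + c) * v)⁻¹ :=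
        Real.rpow_pos_of_pos hx _
      have hle := le_biSup (Fq a b c e₁ e₂ u v) (mem_Ioi.2 hrpos)
      rwa [Fq_eq he₁ he₂ hu hv hA hB hC hD hrpos, ← Real.rpow_mul hx.le,
        inv_mul_cancel₀ hT, Real.rpow_one] at hle
    set M := ⨆ r ∈ Ioi (0:ℝ), Fq a b c e₁ e₂ u v r with hM
    have hx0 : (0:ℝ) < (M.toReal + 1) / Cq a b c e₁ e₂ u v := by
      have := ENNReal.toReal_nonneg (a := M)
      apply div_pos (by linarith) hC₀
    have hle := key _ hx0
    rw [ENNReal.ofReal_le_iff_le_toReal h.ne] at hle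
    rw [show Cq a b c e₁ e₂ u v * ((M.toReal + 1) / Cq a b c e₁ e₂ u v) = M.toReal + 1
      from by field_simp] at hle
    linarith
  · rintro ⟨hA, hB, hC, hD, hT⟩
    have hval : ∀ r ∈ Ioi (0:ℝ), Fq a b c e₁ e₂ u v r
        = ENNReal.ofReal (Cq a b c e₁ e₂ u v) := by
      intro r hr
      rw [Fq_eq he₁ he₂ hu hv hA hB hC hD (mem_Ioi.1 hr), hT, Real.rpow_zero, mul_one]
    calc (⨆ r ∈ Ioi (0:ℝ), Fq a b c e₁ e₂ u v r)
        ≤ ENNReal.ofReal (Cq a b c e₁ e₂ u v) :=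
          iSup₂_le fun r hr => le_of_eq (hval r hr)
      _ < ⊤ := ENNReal.ofReal_lt_top

lemma one_lt_conjExp {p : ℝ} (hp : 1 < p) : 1 < conjExp p := by
  rw [conjExp, lt_div_iff₀ (by linarith)]
  linarith

/-- for `n ≥ 1`, `p₁, p₂, q > 1` with `p₁ ≤ q < p₂`,
`1/r₂ = 1/q - 1/p₂` and `α, β₁, β₂ ∈ ℝ`, the quantity
`sup_{r>0} (∫₀^r ρ^{β₁(1-p₁')+n-1} dρ)^{1/p₁'} ·`
`(∫_r^∞ (∫_ρ^∞ s^{α+n-1} ds)^{r₂/q} (∫₀^ρ s^{β₂(1-p₂')+n-1} ds)^{r₂/q'}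
ρ^{β₂(1-p₂')+n-1} dρ)^{1/r₂}` is finite iff `β₁(1-p₁') + n > 0`, `α + n < 0`,
`β₂(1-p₂') + n > 0`, `(α+n)r₂/q + (β₂(1-p₂')+n)r₂/q' + β₂(1-p₂') + n < 0` and
`(α+n)/q + (β₂(1-p₂')+n)/q' + (β₂(1-p₂')+n)/r₂ + (β₁(1-p₁')+n)/p₁' = 0`. -/
theorem statement18 (n : ℕ) (hn : 1 ≤ n) (p₁ p₂ q r₂ α β₁ β₂ : ℝ)
    (hp₁ : 1 < p₁) (hp₂ : 1 < p₂) (hq : 1 < q) (hp₁q : p₁ ≤ q) (hqp₂ : q < p₂)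
    (hr₂ : 1 / r₂ = 1 / q - 1 / p₂) :
    (⨆ r ∈ Ioi (0:ℝ),
        (∫⁻ ρ in Ioo (0:ℝ) r,
            ENNReal.ofReal ρ ^ (β₁ * (1 - conjExp p₁) + n - 1)) ^ (1 / conjExp p₁) *
          (∫⁻ ρ in Ioi r,
              (∫⁻ s in Ioi ρ, ENNReal.ofReal s ^ (α + n - 1)) ^ (r₂ / q) *
                (∫⁻ s in Ioo (0:ℝ) ρ,
                    ENNReal.ofReal s ^ (β₂ * (1 - conjExp p₂) + n - 1)) ^ (r₂ / conjExp q) *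
                  ENNReal.ofReal ρ ^ (β₂ * (1 - conjExp p₂) + n - 1)) ^ (1 / r₂)) < ⊤ ↔
      0 < β₁ * (1 - conjExp p₁) + n ∧ α + n < 0 ∧ 0 < β₂ * (1 - conjExp p₂) + n ∧
        (α + n) * r₂ / q + (β₂ * (1 - conjExp p₂) + n) * r₂ / conjExp q +
            β₂ * (1 - conjExp p₂) + n < 0 ∧
          (α + n) / q + (β₂ * (1 - conjExp p₂) + n) / conjExp q +
              (β₂ * (1 - conjExp p₂) + n) / r₂ +
                (β₁ * (1 - conjExp p₁) + n) / conjExp p₁ = 0 := by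
  have hq0 : (0:ℝ) < q := by linarith
  have hr₂pos : (0:ℝ) < r₂ := by
    have h1 : (1:ℝ) / p₂ < 1 / q := one_div_lt_one_div_of_lt hq0 hqp₂
    have h2 : (0:ℝ) < 1 / r₂ := by rw [hr₂]; linarith
    exact one_div_pos.1 h2
  have hp₁' : 1 < conjExp p₁ := one_lt_conjExp hp₁
  have hq' : 1 < conjExp q := one_lt_conjExp hq
  have he₁ : (0:ℝ) < r₂ / q := div_pos hr₂pos hq0
  have he₂ : (0:ℝ) < r₂ / conjExp q := div_pos hr₂pos (by linarith)
  have hu : (0:ℝ) < 1 / conjExp p₁ := one_div_pos.2 (by linarith)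
  have hv : (0:ℝ) < 1 / r₂ := one_div_pos.2 hr₂pos
  have core := statement18_core (β₁ * (1 - conjExp p₁) + n) (α + n)
    (β₂ * (1 - conjExp p₂) + n) (r₂ / q) (r₂ / conjExp q) (1 / conjExp p₁) (1 / r₂)
    he₁ he₂ hu hv
  refine Iff.trans ?_ (Iff.trans core ?_)
  · rfl
  · set a := β₁ * (1 - conjExp p₁) + (n:ℝ)
    set b := α + (n:ℝ)
    set c := β₂ * (1 - conjExp p₂) + (n:ℝ)
    have hd_eq : b * (r₂ / q) + c * (r₂ / conjExp q) + c
        = b * r₂ / q + c * r₂ / conjExp q + β₂ * (1 - conjExp p₂) + n := by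
      simp only [c]
      ring
    have hq'0 : conjExp q ≠ 0 := by linarith
    have hp₁'0 : conjExp p₁ ≠ 0 := by linarith
    have hEq : a * (1 / conjExp p₁) + (b * (r₂ / q) + c * (r₂ / conjExp q) + c) * (1 / r₂)
        = b / q + c / conjExp q + c / r₂ + a / conjExp p₁ := by
      field_simp
      ring
    constructor
    · rintro ⟨h1, h2, h3, h4, h5⟩
      exact ⟨h1, h2, h3, by linarith, by linarith⟩
    · rintro ⟨h1, h2, h3, h4, h5⟩
      exact ⟨h1, h2, h3, by linarith, by linarith⟩
end
end
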